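/- arXiv:2107.02037 — 4 statements merged into one kernel-verified Lean document; each statement's English description precedes it below -/
import Mathlib

section
/- Mertens' third theorem in 𝔽_q[T]: For fixed prime power q, Π_{P ∈ 𝒫, deg P ≤ n} (1 − 1/|P|)^{-1} ∼ e^γ · n as n → ∞, where γ is the Euler–Mascheroni constant and the product is over monic irreducible polynomials of degree at most n. -/
open scoped BigOperators
open Filter

noncomputable section

namespace FFEH

variable {Fq : Type} [Field Fq] [Fintype Fq]

open Classical in
/-- The absolute value `|A| = q ^ deg A` of a polynomial `A ∈ 𝔽_q[T]`, with `|0| = 0`. -/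
def absP (A : Polynomial Fq) : ℝ :=
  if A = 0 then 0 else (Fintype.card Fq : ℝ) ^ A.natDegree

/-- Monic irreducible ("prime") polynomials. -/
def IsMonicPrime (P : Polynomial Fq) : Prop := P.Monic ∧ Irreducible P

/-- A Dirichlet character of modulus `R` on `𝔽_q[T]`. -/
structure IsDirichletChar (R : Polynomial Fq) (χ : Polynomial Fq → ℂ) : Prop where
  map_one' : χ 1 = 1
  map_mul' : ∀ A B : Polynomial Fq, χ (A * B) = χ A * χ B
  congr' : ∀ A B : Polynomial Fq, R ∣ A - B → χ A = χ B
  eq_zero_iff' : ∀ A : Polynomial Fq, χ A = 0 ↔ ¬ IsCoprime A R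

/-- A primitive Dirichlet character of modulus `R`: one induced by no character of
modulus of strictly smaller degree. -/
def IsPrimitiveChar (R : Polynomial Fq) (χ : Polynomial Fq → ℂ) : Prop :=
  IsDirichletChar R χ ∧
    ∀ S : Polynomial Fq, S.Monic → S ∣ R → S.natDegree < R.natDegree →
      ¬ ∃ χ₁ : Polynomial Fq → ℂ, IsDirichletChar S χ₁ ∧
        ∀ A : Polynomial Fq, IsCoprime A R → χ A = χ₁ A

/-- An even character: trivial on the nonzero constants. -/
def IsEvenChar (χ : Polynomial Fq → ℂ) : Prop :=
  ∀ a : Fq, a ≠ 0 → χ (Polynomial.C a) = 1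

/-- `φ*(R)`: the number of primitive characters of modulus `R`. -/
def numPrimChars (R : Polynomial Fq) : ℕ :=
  Set.ncard {χ : Polynomial Fq → ℂ | IsPrimitiveChar R χ}

/-- The Euler totient `φ(R) = #(𝔽_q[T]/(R))ˣ`. -/
def phiP (R : Polynomial Fq) : ℕ :=
  Nat.card ((Polynomial Fq ⧸ Ideal.span {R})ˣ)

/-- `ω(A)`: the number of distinct monic prime divisors of `A`. -/
def omegaP (A : Polynomial Fq) : ℕ :=
  Set.ncard {P : Polynomial Fq | IsMonicPrime P ∧ P ∣ A}

open Classical in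
/-- The Möbius function on monic polynomials. -/
def muP (A : Polynomial Fq) : ℤ :=
  if Squarefree A then (-1) ^ omegaP A else 0

/-- `d_k(A)`: the number of ways of writing `A` as an ordered product of `k` monic
polynomials. -/
def dk (k : ℕ) (A : Polynomial Fq) : ℕ :=
  Set.ncard {v : Fin k → Polynomial Fq | (∀ i, (v i).Monic) ∧ ∏ i, v i = A}

/-- `A ∈ 𝒮_ℳ(X)`: `A` is monic and all its prime divisors have degree at most `X`. -/
def SmoothM (X : ℕ) (A : Polynomial Fq) : Prop :=
  A.Monic ∧ ∀ P : Polynomial Fq, IsMonicPrime P → P ∣ A → P.natDegree ≤ X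

/-- The Dirichlet `L`-function of a non-trivial character `χ` of modulus `R`:
`L(s,χ) = ∑_{A monic, deg A < deg R} χ(A) |A|^{-s}`. -/
def Lfun (R : Polynomial Fq) (χ : Polynomial Fq → ℂ) (s : ℂ) : ℂ :=
  ∑ᶠ A ∈ {A : Polynomial Fq | A.Monic ∧ A.natDegree < R.natDegree},
    χ A * (absP A : ℂ) ^ (-s)

open Classical in
/-- The von Mangoldt function: `Λ(A) = log |P|` if `A = P^j` (`P` monic prime, `j ≥ 1`),
and `0` otherwise. -/
def LambdaP (A : Polynomial Fq) : ℝ :=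
  if h : ∃ P : Polynomial Fq, (P.Monic ∧ Irreducible P) ∧ ∃ j : ℕ, 1 ≤ j ∧ A = P ^ j
  then Real.log (absP h.choose) else 0

/-- The partial Euler product `P_X(s,χ)`. -/
def PX (X : ℕ) (χ : Polynomial Fq → ℂ) (s : ℂ) : ℂ :=
  Complex.exp (∑ᶠ A ∈ {A : Polynomial Fq | A.Monic ∧ A.natDegree ≤ X},
    χ A * (LambdaP A : ℂ) / ((absP A : ℂ) ^ s * (Real.log (absP A) : ℂ)))

/-- The `L`-function of `χ` as a polynomial in the variable `w = q^{-s}`. -/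
def LPoly (R : Polynomial Fq) (χ : Polynomial Fq → ℂ) : Polynomial ℂ :=
  ∑ n ∈ Finset.range R.natDegree,
    Polynomial.C (∑ᶠ A ∈ {A : Polynomial Fq | A.Monic ∧ A.natDegree = n}, χ A) *
      Polynomial.X ^ n

/-- The sum of `f` over the zeros of `L(s,χ)` counted with multiplicity, including
all the vertical `2π/log q`-periodic repetitions: the zeros are exactly the points
`-log w / log q + 2πim/log q` for `w` a root (with multiplicity) of the `L`-polynomial
and `m ∈ ℤ`. -/
def zeroSum (R : Polynomial Fq) (χ : Polynomial Fq → ℂ) (f : ℂ → ℂ) : ℂ :=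
  ((LPoly R χ).roots.map (fun w => ∑' m : ℤ,
    f (-Complex.log w / (Real.log (Fintype.card Fq) : ℂ) +
        2 * Real.pi * Complex.I * (m : ℂ) / (Real.log (Fintype.card Fq) : ℂ)))).sum

/-- The exponential integral `E₁(y) = ∫_{w=y}^{y+∞} e^{-w}/w dw`, along the horizontal
ray from `y` in the direction of `+1`. -/
def E1 (y : ℂ) : ℂ :=
  ∫ t : ℝ in Set.Ioi (0 : ℝ), Complex.exp (-(y + (t : ℂ))) / (y + (t : ℂ))

/-- `U(z) = ∫_0^∞ u(x) E₁(z log x) dx`. -/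
def Ufun (u : ℝ → ℝ) (z : ℂ) : ℂ :=
  ∫ x : ℝ in Set.Ioi (0 : ℝ), (u x : ℂ) * E1 (z * (Real.log x : ℂ))

/-- The Mellin transform `ũ(s) = ∫_0^∞ x^{s-1} u(x) dx`. -/
def mellinT (u : ℝ → ℝ) (s : ℂ) : ℂ :=
  ∫ x : ℝ in Set.Ioi (0 : ℝ), (x : ℂ) ^ (s - 1) * (u x : ℂ)

/-- The arithmetic-factor constant `a(k)`. -/
def aConst (Fq : Type) [Field Fq] [Fintype Fq] (k : ℕ) : ℝ :=
  ∏' P : {P : Polynomial Fq // IsMonicPrime P},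
    (1 - (absP P.1)⁻¹) ^ (k ^ 2) * ∑' m : ℕ, (dk k (P.1 ^ m) : ℝ) ^ 2 / absP (P.1 ^ m)

/-- The modified partial Euler product `P_X^*(s,χ)`. -/
def PXstar (X : ℕ) (χ : Polynomial Fq → ℂ) (s : ℂ) : ℂ :=
  (∏ᶠ P ∈ {P : Polynomial Fq | IsMonicPrime P ∧ P.natDegree ≤ X},
      (1 - χ P / (absP P : ℂ) ^ s)⁻¹) *
    ∏ᶠ P ∈ {P : Polynomial Fq | IsMonicPrime P ∧ X < 2 * P.natDegree ∧ P.natDegree ≤ X},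
      (1 + χ P ^ 2 / (2 * (absP P : ℂ) ^ (2 * s)))⁻¹

open Classical in
/-- The multiplicity of `P` in `A` (for `A ≠ 0`). -/
def multP (P A : Polynomial Fq) : ℕ :=
  if A = 0 then 0 else Nat.findGreatest (fun e => P ^ e ∣ A) A.natDegree

/-- Local coefficients of the Dirichlet series of `P_X^*(s,χ)^k`. -/
def locAlpha (k X : ℕ) (P : Polynomial Fq) (m : ℕ) : ℝ :=
  if m = 0 then 1
  else if X < P.natDegree then 0
  else if 2 * P.natDegree ≤ X then (dk k (P ^ m) : ℝ)
  else ∑ j ∈ Finset.range (m / 2 + 1),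
    (dk k (P ^ (m - 2 * j)) : ℝ) * (dk k (P ^ j) : ℝ) * (-(2 : ℝ)⁻¹) ^ j

/-- `α_k(A)`: the coefficients of the Dirichlet series `P_X^*(s,χ)^k = ∑ α_k(A)χ(A)|A|^{-s}`. -/
def alphaK (k X : ℕ) (A : Polynomial Fq) : ℝ :=
  ∏ᶠ P ∈ {P : Polynomial Fq | IsMonicPrime P ∧ P ∣ A}, locAlpha k X P (multP P A)

/-- Local coefficients of the Dirichlet series of `P_X^*(s,χ)^{-1}`. -/
def locAlphaNeg (X : ℕ) (P : Polynomial Fq) (m : ℕ) : ℝ :=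
  if m = 0 then 1
  else if X < P.natDegree then 0
  else if m = 1 then -1
  else if m = 2 then (if 2 * P.natDegree ≤ X then 0 else 2⁻¹)
  else if m = 3 then (if 2 * P.natDegree ≤ X then 0 else -2⁻¹)
  else 0

/-- The multiplicative function `α_{-1}`. -/
def alphaNeg (X : ℕ) (A : Polynomial Fq) : ℝ :=
  ∏ᶠ P ∈ {P : Polynomial Fq | IsMonicPrime P ∧ P ∣ A}, locAlphaNeg X P (multP P A)

/-- The cosine integral `Ci(y) = -∫_y^∞ cos t / t dt`. -/
def Ci (y : ℝ) : ℝ := -∫ t : ℝ in Set.Ioi y, Real.cos t / t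

open Classical in
/-- The greatest common monic divisor of two polynomials. -/
def gcdP (A B : Polynomial Fq) : Polynomial Fq :=
  Polynomial.C ((EuclideanDomain.gcd A B).leadingCoeff)⁻¹ * EuclideanDomain.gcd A B

/-- The decomposition shape of Lemma `A₁A₂A₃ = B₁B₂B₃`: all factors monic, the
coprimality conditions `gcd(V_{i,j}, V_{k,l}) = 1` for `i ≠ k` and `j ≠ l`, and the six
product equations. -/
def Decomp3 (A1 A2 A3 B1 B2 B3 G1 G2 G3 V12 V13 V21 V23 V31 V32 : Polynomial Fq) : Prop :=
  G1.Monic ∧ G2.Monic ∧ G3.Monic ∧ V12.Monic ∧ V13.Monic ∧ V21.Monic ∧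
    V23.Monic ∧ V31.Monic ∧ V32.Monic ∧
  IsCoprime V12 V21 ∧ IsCoprime V12 V23 ∧ IsCoprime V12 V31 ∧
  IsCoprime V13 V21 ∧ IsCoprime V13 V31 ∧ IsCoprime V13 V32 ∧
  IsCoprime V21 V32 ∧ IsCoprime V23 V31 ∧ IsCoprime V23 V32 ∧
  A1 = G1 * V12 * V13 ∧ B1 = G1 * V21 * V31 ∧
  A2 = G2 * V21 * V23 ∧ B2 = G2 * V12 * V32 ∧
  A3 = G3 * V31 * V32 ∧ B3 = G3 * V13 * V23

/-!
Taking logarithms, `log ∏_{deg P ≤ n} (1 - |P|⁻¹)⁻¹ = ∑_{d ≤ n} π(d) (-log (1 - q^{-d}))`, which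
expands to `∑_m c_n(m) q^{-m} / m` with `c_n(m) = ∑_{d ∣ m, d ≤ n} d π(d)`. By Gauss's formula
`∑_{d ∣ m} d π(d) = q^m` we get `c_n(m) = q^m` for `m ≤ n`, so these terms sum to the harmonic
number `H_n`, while `c_n(m) ≤ ∑_{d ≤ n} q^d` makes the tail `O(1/n)`. Hence the product is
`exp (H_n + o(1)) = e^γ n (1 + o(1))`.
-/

open Polynomial Finset

lemma finite_setOf_natDegree_le {R : Type*} [Semiring R] [Finite R] (n : ℕ) :
    {p : R[X] | p.natDegree ≤ n}.Finite := by
  refine Set.Finite.of_finite_image (f := fun p : R[X] => fun i : Fin (n + 1) => p.coeff i)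
    (Set.toFinite _) fun p hp p' hp' h => Polynomial.ext fun i => ?_
  rcases le_or_gt i n with hi | hi
  · exact congrFun h ⟨i, Nat.lt_succ_of_le hi⟩
  · rw [coeff_eq_zero_of_natDegree_lt (lt_of_le_of_lt hp hi),
      coeff_eq_zero_of_natDegree_lt (lt_of_le_of_lt hp' hi)]

lemma finite_setOf_isMonicPrime_natDegree_le (n : ℕ) :
    {P : Fq[X] | IsMonicPrime P ∧ P.natDegree ≤ n}.Finite :=
  (finite_setOf_natDegree_le n).subset fun _ hP => hP.2

variable (Fq) in
def primesOfDegree (d : ℕ) : Finset Fq[X] :=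
  ((finite_setOf_isMonicPrime_natDegree_le d).subset
    fun (_ : Fq[X]) (hP : IsMonicPrime _ ∧ _ = d) => ⟨hP.1, hP.2.le⟩).toFinset

lemma mem_primesOfDegree {d : ℕ} {P : Fq[X]} :
    P ∈ primesOfDegree Fq d ↔ IsMonicPrime P ∧ P.natDegree = d :=
  Set.Finite.mem_toFinset _

lemma natDegree_eq_sum_natDegree_normalizedFactors {K : Type*} [Field K] [DecidableEq K]
    {f : K[X]} (hf : Squarefree f) :
    f.natDegree = ∑ P ∈ (UniqueFactorizationMonoid.normalizedFactors f).toFinset, P.natDegree := by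
  have hnodup := (UniqueFactorizationMonoid.squarefree_iff_nodup_normalizedFactors
    hf.ne_zero).mp hf
  rw [Finset.sum_eq_multiset_sum, Multiset.toFinset_val, hnodup.dedup,
    ← natDegree_multiset_prod_of_monic _ fun P hP =>
      ((Polynomial.mem_normalizedFactors_iff hf.ne_zero).mp hP).2.1,
    UniqueFactorizationMonoid.prod_normalizedFactors_eq hf.ne_zero]
  exact (natDegree_eq_of_degree_eq degree_normalize).symm

lemma mem_normalizedFactors_X_pow_card_pow_sub_X_iff [DecidableEq Fq] {m : ℕ} (hm : m ≠ 0)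
    {P : Fq[X]} :
    P ∈ UniqueFactorizationMonoid.normalizedFactors (X ^ Fintype.card Fq ^ m - X : Fq[X]) ↔
      IsMonicPrime P ∧ P.natDegree ∣ m := by
  rw [Polynomial.mem_normalizedFactors_iff
    (FiniteField.X_pow_card_pow_sub_X_ne_zero Fq hm Fintype.one_lt_card), IsMonicPrime]
  constructor
  · rintro ⟨hirr, hmon, hdvd⟩
    rw [← Nat.card_eq_fintype_card] at hdvd
    exact ⟨⟨hmon, hirr⟩, hirr.natDegree_dvd_iff_dvd_X_pow_card_pow_sub_X.mpr hdvd⟩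
  · rintro ⟨⟨hmon, hirr⟩, hdeg⟩
    rw [← Nat.card_eq_fintype_card]
    exact ⟨hirr, hmon, hirr.natDegree_dvd_iff_dvd_X_pow_card_pow_sub_X.mp hdeg⟩

/-- `X^{q^m} - X` is the squarefree product of the monic irreducibles whose degree divides `m`. -/
lemma sum_divisors_mul_card_primesOfDegree {m : ℕ} (hm : m ≠ 0) :
    ∑ d ∈ m.divisors, d * #(primesOfDegree Fq d) = Fintype.card Fq ^ m := by
  classical
  set f : Fq[X] := X ^ Fintype.card Fq ^ m - X
  have hsep : f.Separable := by
    obtain ⟨p, hp⟩ := CharP.exists Fq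
    have : Fact p.Prime := ⟨CharP.char_is_prime Fq p⟩
    obtain ⟨e, -, hqe⟩ := FiniteField.card Fq p
    refine galois_poly_separable p _ ?_
    rw [hqe, ← pow_mul]
    exact dvd_pow_self p (mul_ne_zero e.ne_zero hm)
  have hdeg : f.natDegree = Fintype.card Fq ^ m :=
    FiniteField.X_pow_card_pow_sub_X_natDegree_eq Fq hm Fintype.one_lt_card
  rw [← hdeg, natDegree_eq_sum_natDegree_normalizedFactors hsep.squarefree,
    ← Finset.sum_fiberwise_of_maps_to (g := natDegree) (t := m.divisors) fun P hP =>
      Nat.mem_divisors.mpr ⟨((mem_normalizedFactors_X_pow_card_pow_sub_X_iff hm).mp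
        (Multiset.mem_toFinset.mp hP)).2, hm⟩]
  refine Finset.sum_congr rfl fun d hd => ?_
  have hfiber : {P ∈ (UniqueFactorizationMonoid.normalizedFactors f).toFinset |
      P.natDegree = d} = primesOfDegree Fq d := by
    ext P
    rw [Finset.mem_filter, Multiset.mem_toFinset,
      mem_normalizedFactors_X_pow_card_pow_sub_X_iff hm, mem_primesOfDegree]
    exact ⟨fun ⟨⟨hP, _⟩, hd⟩ => ⟨hP, hd⟩,
      fun ⟨hP, hPd⟩ => ⟨⟨hP, hPd ▸ Nat.dvd_of_mem_divisors hd⟩, hPd⟩⟩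
  rw [hfiber, Finset.sum_congr rfl fun P hP => (mem_primesOfDegree.mp hP).2, Finset.sum_const,
    smul_eq_mul, mul_comm]

lemma inv_one_sub_inv_absP_eq_exp {P : Fq[X]} (hP : 0 < P.natDegree) :
    (1 - (absP P)⁻¹)⁻¹ =
      Real.exp (-Real.log (1 - ((Fintype.card Fq : ℝ))⁻¹ ^ P.natDegree)) := by
  have hq : (1 : ℝ) < Fintype.card Fq := by exact_mod_cast Fintype.one_lt_card
  have hpos : 0 < 1 - ((Fintype.card Fq : ℝ))⁻¹ ^ P.natDegree := by
    rw [sub_pos]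
    exact pow_lt_one₀ (by positivity) (inv_lt_one_of_one_lt₀ hq) hP.ne'
  rw [Real.exp_neg, Real.exp_log hpos, absP, if_neg (ne_zero_of_natDegree_gt hP), inv_pow]

lemma finprod_primes_natDegree_le_eq_exp (n : ℕ) :
    ∏ᶠ P ∈ {P : Fq[X] | IsMonicPrime P ∧ P.natDegree ≤ n}, (1 - (absP P)⁻¹)⁻¹ =
      Real.exp (∑ d ∈ Icc 1 n,
        #(primesOfDegree Fq d) * -Real.log (1 - ((Fintype.card Fq : ℝ))⁻¹ ^ d)) := by
  set S := (finite_setOf_isMonicPrime_natDegree_le (Fq := Fq) n).toFinset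
  have hS : ∀ P ∈ S, IsMonicPrime P ∧ P.natDegree ≤ n := fun _ => (Set.Finite.mem_toFinset _).mp
  rw [finprod_mem_eq_finite_toFinset_prod _ (finite_setOf_isMonicPrime_natDegree_le n),
    Finset.prod_congr rfl fun P hP => inv_one_sub_inv_absP_eq_exp (hS P hP).1.2.natDegree_pos,
    ← Real.exp_sum,
    ← Finset.sum_fiberwise_of_maps_to (g := natDegree) (t := Icc 1 n) fun P hP =>
      Finset.mem_Icc.mpr ⟨(hS P hP).1.2.natDegree_pos, (hS P hP).2⟩]
  refine congrArg Real.exp (Finset.sum_congr rfl fun d hd => ?_)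
  have hfiber : {P ∈ S | P.natDegree = d} = primesOfDegree Fq d := by
    ext P
    rw [Finset.mem_filter, Set.Finite.mem_toFinset, mem_primesOfDegree]
    exact ⟨fun ⟨⟨hP, _⟩, hd⟩ => ⟨hP, hd⟩,
      fun ⟨hP, hPd⟩ => ⟨⟨hP, hPd ▸ (Finset.mem_Icc.mp hd).2⟩, hPd⟩⟩
  rw [hfiber, Finset.sum_congr rfl fun P hP => by rw [(mem_primesOfDegree.mp hP).2],
    Finset.sum_const, nsmul_eq_mul]

/-- The `m = 0` term vanishes because `(0 : ℝ)⁻¹ = 0`. -/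
lemma hasSum_ite_dvd_pow_div {x : ℝ} (hx : |x| < 1) {d : ℕ} (hd : d ≠ 0) :
    HasSum (fun m : ℕ => if d ∣ m then d * x ^ m / m else 0) (-Real.log (1 - x ^ d)) := by
  have hxd : |x ^ d| < 1 := by
    rw [abs_pow]
    exact pow_lt_one₀ (abs_nonneg x) hx hd
  have hinj : Function.Injective fun k : ℕ => d * (k + 1) := fun a b hab =>
    Nat.succ_injective (Nat.eq_of_mul_eq_mul_left (Nat.pos_of_ne_zero hd) hab)
  refine (hinj.hasSum_iff fun m hm => ?_).mp
    ((Real.hasSum_pow_div_log_of_abs_lt_one hxd).congr_fun fun k => ?_)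
  · split_ifs with hdm
    · obtain ⟨_ | k, rfl⟩ := hdm
      · simp
      · exact absurd ⟨k, rfl⟩ hm
    · rfl
  · have hd' : (d : ℝ) ≠ 0 := Nat.cast_ne_zero.mpr hd
    simp only [Function.comp_apply, dvd_mul_right, if_true, Nat.cast_mul, Nat.cast_succ, pow_mul]
    field_simp

def truncDivisorSum (a : ℕ → ℝ) (n m : ℕ) : ℝ := ∑ d ∈ Icc 1 n with d ∣ m, d * a d

lemma hasSum_truncDivisorSum {x : ℝ} (hx : |x| < 1) (a : ℕ → ℝ) (n : ℕ) :
    HasSum (fun m : ℕ => truncDivisorSum a n m * x ^ m / m)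
      (∑ d ∈ Icc 1 n, a d * -Real.log (1 - x ^ d)) := by
  refine (hasSum_sum fun d hd => (hasSum_ite_dvd_pow_div hx
    (Nat.one_le_iff_ne_zero.mp (Finset.mem_Icc.mp hd).1)).mul_left (a d)).congr_fun fun m => ?_
  rw [truncDivisorSum, Finset.sum_filter, Finset.sum_mul, Finset.sum_div]
  refine Finset.sum_congr rfl fun d _ => ?_
  split_ifs <;> ring

section DivisorSumEqPow

variable {q : ℝ} {a : ℕ → ℝ} (hsum : ∀ m ≠ 0, ∑ d ∈ m.divisors, d * a d = q ^ m)
include hsum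

lemma truncDivisorSum_eq_pow {n m : ℕ} (hm : m ≠ 0) (hmn : m ≤ n) :
    truncDivisorSum a n m = q ^ m := by
  rw [← hsum m hm, truncDivisorSum]
  refine Finset.sum_congr (Finset.ext fun d => ?_) fun _ _ => rfl
  rw [Finset.mem_filter, Finset.mem_Icc, Nat.mem_divisors]
  exact ⟨fun h => ⟨h.2, hm⟩, fun h =>
    ⟨⟨Nat.pos_of_dvd_of_pos h.1 (Nat.pos_of_ne_zero hm), (Nat.le_of_dvd
      (Nat.pos_of_ne_zero hm) h.1).trans hmn⟩, h.1⟩⟩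

lemma truncDivisorSum_le (hq : 0 ≤ q) (ha : ∀ d, 0 ≤ a d) (n m : ℕ) :
    truncDivisorSum a n m ≤ ∑ d ∈ range (n + 1), q ^ d := by
  have hterm : ∀ d ≠ 0, d * a d ≤ q ^ d := fun d hd => hsum d hd ▸
    Finset.single_le_sum (f := fun i : ℕ => (i : ℝ) * a i)
      (fun i _ => mul_nonneg i.cast_nonneg (ha i))
      (Nat.mem_divisors_self d hd)
  calc truncDivisorSum a n m ≤ ∑ d ∈ Icc 1 n with d ∣ m, q ^ d :=
        Finset.sum_le_sum fun d hd =>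
          hterm d (Nat.one_le_iff_ne_zero.mp (Finset.mem_Icc.mp (Finset.mem_filter.mp hd).1).1)
    _ ≤ ∑ d ∈ range (n + 1), q ^ d :=
        Finset.sum_le_sum_of_subset_of_nonneg
          (fun d hd => Finset.mem_range.mpr (Nat.lt_succ_of_le
            (Finset.mem_Icc.mp (Finset.mem_filter.mp hd).1).2))
          fun _ _ _ => by positivity

lemma sum_range_truncDivisorSum_eq_harmonic (hq : q ≠ 0) (n : ℕ) :
    ∑ m ∈ range (n + 1), truncDivisorSum a n m * q⁻¹ ^ m / m = harmonic n := by
  rw [Finset.sum_range_succ', harmonic, Rat.cast_sum]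
  simp only [Nat.cast_zero, div_zero, add_zero]
  refine Finset.sum_congr rfl fun i hi => ?_
  rw [truncDivisorSum_eq_pow hsum i.succ_ne_zero (Finset.mem_range.mp hi), ← mul_pow,
    mul_inv_cancel₀ hq]
  push_cast
  ring

/-- The error is the tail `∑_{m > n} c_n(m) q^{-m} / m`, and `c_n(m) ≤ ∑_{d ≤ n} q^d`. -/
lemma sum_neg_log_sub_harmonic_mem_Icc (hq : 1 < q) (ha : ∀ d, 0 ≤ a d) (n : ℕ) :
    ∑ d ∈ Icc 1 n, a d * -Real.log (1 - q⁻¹ ^ d) - harmonic n ∈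
      Set.Icc 0 (q / (q - 1) ^ 2 / (n + 1)) := by
  set x := q⁻¹ with hxq
  have hx0 : 0 < x := inv_pos.mpr (zero_lt_one.trans hq)
  have hx1 : x < 1 := inv_lt_one_of_one_lt₀ hq
  set f := fun m : ℕ => truncDivisorSum a n m * x ^ m / m
  have hf := hasSum_truncDivisorSum (abs_lt.mpr ⟨by linarith, hx1⟩) a n
  have hsplit := hf.summable.sum_add_tsum_nat_add (n + 1)
  rw [hf.tsum_eq, sum_range_truncDivisorSum_eq_harmonic hsum (zero_lt_one.trans hq).ne'] at hsplit
  rw [← hsplit, add_sub_cancel_left]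
  set B := ∑ d ∈ range (n + 1), q ^ d with hBq
  have hB : B * x ^ (n + 1) ≤ (q - 1)⁻¹ := by
    rw [hBq, geom_sum_eq hq.ne', div_mul_eq_mul_div, sub_mul, ← mul_pow, hxq,
      mul_inv_cancel₀ (zero_lt_one.trans hq).ne', one_pow, one_mul, div_eq_mul_inv]
    exact mul_le_of_le_one_left (inv_nonneg.mpr (sub_nonneg.mpr hq.le))
      (sub_le_self 1 (by positivity))
  have hterm : ∀ i : ℕ, f (i + (n + 1)) ≤ B * x ^ (n + 1) / (n + 1) * x ^ i := fun i => by
    have hc := truncDivisorSum_le hsum (zero_lt_one.trans hq).le ha n (i + (n + 1))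
    calc f (i + (n + 1)) ≤ B * x ^ (i + (n + 1)) / (n + 1) := by
          refine div_le_div₀ (by positivity) (mul_le_mul_of_nonneg_right hc (by positivity))
            (by positivity) ?_
          push_cast
          linarith [(i.cast_nonneg : (0 : ℝ) ≤ i)]
      _ = B * x ^ (n + 1) / (n + 1) * x ^ i := by ring
  have hgeom := (summable_geometric_of_lt_one hx0.le hx1).mul_left (B * x ^ (n + 1) / (n + 1))
  refine ⟨tsum_nonneg fun i => div_nonneg (mul_nonneg
    (Finset.sum_nonneg fun d _ => mul_nonneg d.cast_nonneg (ha d)) (by positivity))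
    (Nat.cast_nonneg _), ?_⟩
  calc ∑' i, f (i + (n + 1)) ≤ ∑' i, B * x ^ (n + 1) / (n + 1) * x ^ i :=
        ((summable_nat_add_iff (n + 1)).mpr hf.summable).tsum_le_tsum hterm hgeom
    _ = B * x ^ (n + 1) / (n + 1) * (1 - x)⁻¹ := by
        rw [tsum_mul_left, tsum_geometric_of_lt_one hx0.le hx1]
    _ ≤ (q - 1)⁻¹ / (n + 1) * (1 - x)⁻¹ := by gcongr
    _ = q / (q - 1) ^ 2 / (n + 1) := by
        rw [hxq]
        field_simp

theorem tendsto_sum_neg_log_sub_harmonic (hq : 1 < q) (ha : ∀ d, 0 ≤ a d) :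
    Tendsto (fun n : ℕ => ∑ d ∈ Icc 1 n, a d * -Real.log (1 - q⁻¹ ^ d) - harmonic n)
      atTop (nhds 0) := by
  have hC : Tendsto (fun n : ℕ => q / (q - 1) ^ 2 / (n + 1)) atTop (nhds 0) := by
    simpa [Function.comp_def] using
      (tendsto_const_div_atTop_nhds_zero_nat (q / (q - 1) ^ 2)).comp (tendsto_add_atTop_nat 1)
  exact squeeze_zero (fun n => (sum_neg_log_sub_harmonic_mem_Icc hsum hq ha n).1)
    (fun n => (sum_neg_log_sub_harmonic_mem_Icc hsum hq ha n).2) hC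

end DivisorSumEqPow

/-- **Mertens' third theorem in `𝔽_q[T]`:**
`∏_{deg P ≤ n} (1 - |P|⁻¹)⁻¹ ∼ e^γ n` as `n → ∞`. -/
theorem mertens_third_theorem
    (Fq : Type) [Field Fq] [Fintype Fq] :
    Filter.Tendsto (fun n : ℕ =>
      (∏ᶠ P ∈ {P : Polynomial Fq | IsMonicPrime P ∧ P.natDegree ≤ n}, (1 - (absP P)⁻¹)⁻¹) /
        (Real.exp Real.eulerMascheroniConstant * (n : ℝ)))
      Filter.atTop (nhds 1) := by
  set L := fun n : ℕ => ∑ d ∈ Icc 1 n,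
    (#(primesOfDegree Fq d) : ℝ) * -Real.log (1 - ((Fintype.card Fq : ℝ))⁻¹ ^ d)
  have hL : Tendsto (fun n : ℕ => L n - harmonic n) atTop (nhds 0) :=
    tendsto_sum_neg_log_sub_harmonic
      (fun m hm => by exact_mod_cast sum_divisors_mul_card_primesOfDegree hm)
      (by exact_mod_cast Fintype.one_lt_card) fun d => Nat.cast_nonneg _
  have hH : Tendsto (fun n : ℕ => harmonic n - Real.log n - Real.eulerMascheroniConstant)
      atTop (nhds 0) := by
    simpa using Real.tendsto_harmonic_sub_log.sub_const Real.eulerMascheroniConstant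
  have hexp := (Real.continuous_exp.tendsto 0).comp (add_zero (0 : ℝ) ▸ hL.add hH)
  rw [Real.exp_zero] at hexp
  refine hexp.congr' ?_
  filter_upwards [eventually_ne_atTop 0] with n hn
  have hprod := finprod_primes_natDegree_le_eq_exp (Fq := Fq) n
  simp only [Set.mem_ofPred_eq] at hprod
  rw [Function.comp_apply, hprod,
    show L n - harmonic n + (harmonic n - Real.log n - Real.eulerMascheroniConstant) =
      L n - (Real.eulerMascheroniConstant + Real.log n) by ring,
    Real.exp_sub, Real.exp_add, Real.exp_log (Nat.cast_pos.mpr (Nat.pos_of_ne_zero hn))]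

end FFEH
end
end

section
/- Off-diagonal bound for twisted congruence sums: Let R ∈ ℳ, let Z₁ ≤ deg R be a non-negative integer, and let F ∈ ℳ divide R. Suppose C, D ∈ 𝒮_ℳ(X) with deg C ≤ (deg R)/10 and deg D ≤ (deg R)/10. Then Σ_{A,B ∈ ℳ, deg(AB) = Z₁, AC ≡ BD (mod F), AC ≠ BD, gcd(AB,R)=1} 1/|AB|^{1/2} ≪ q^{Z₁/2} (Z₁ + 1) |CD| / |F|, with an absolute implied constant. -/
open scoped BigOperators
open Filter

noncomputable section

namespace FFEH

variable {Fq : Type} [Field Fq] [Fintype Fq]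

/-! Every term of the sum equals `q ^ (-Z₁/2)`, so it is a matter of counting pairs. Fix
`deg A = a`, `deg B = b`. If `deg F ≤ a + deg C`, then `(A, B)` is determined by `B` and the
quotient `A C /ₘ F`: the congruence `A C ≡ B D (mod F)` fixes the remainder of `A C`, and `C` is
monic, hence cancellable. That quotient is monic of degree `a + deg C - deg F`, so there are at
most `q ^ (a + b + deg C - deg F)` pairs. The case `deg F ≤ b + deg D` is symmetric, and if
neither holds then `F` cannot divide the nonzero `A C - B D`. Summing over the `Z₁ + 1`
splittings `a + b = Z₁` gives the bound with constant `1`. -/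

open Polynomial Set

section MonicOfDegree

variable (R : Type*) [Semiring R]

def monicOfDegree (n : ℕ) : Set R[X] := {P | P.Monic ∧ P.natDegree = n}

variable {R}

lemma injOn_coeff_monicOfDegree (n : ℕ) :
    InjOn (fun P : R[X] => fun i : Fin n => P.coeff i) (monicOfDegree R n) := by
  rintro P ⟨hP, rfl⟩ Q ⟨hQ, hQP⟩ hPQ
  ext i
  rcases lt_trichotomy i P.natDegree with hi | rfl | hi
  · exact congrFun hPQ ⟨i, hi⟩
  · rw [hP.coeff_natDegree, ← hQP, hQ.coeff_natDegree]
  · rw [coeff_eq_zero_of_natDegree_lt hi, coeff_eq_zero_of_natDegree_lt (hQP ▸ hi)]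

lemma finite_monicOfDegree [Finite R] (n : ℕ) : (monicOfDegree R n).Finite :=
  Finite.of_injOn (mapsTo_univ _ _) (injOn_coeff_monicOfDegree n) finite_univ

lemma ncard_monicOfDegree_le [Fintype R] (n : ℕ) :
    (monicOfDegree R n).ncard ≤ Fintype.card R ^ n :=
  calc (monicOfDegree R n).ncard ≤ (univ : Set (Fin n → R)).ncard :=
        ncard_le_ncard_of_injOn _ (fun _ _ => mem_univ _) (injOn_coeff_monicOfDegree n)
    _ = Fintype.card R ^ n := by simp

end MonicOfDegree

section OffDiagonal

variable {R : Type*} [CommRing R]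

lemma _root_.Polynomial.Monic.divByMonic_mem_monicOfDegree [Nontrivial R] {P F : R[X]}
    (hP : P.Monic) (hF : F.Monic) (h : F.natDegree ≤ P.natDegree) :
    P /ₘ F ∈ monicOfDegree R (P.natDegree - F.natDegree) := by
  have hdeg : F.degree ≤ P.degree := by
    rw [degree_eq_natDegree hF.ne_zero, degree_eq_natDegree hP.ne_zero]
    exact mod_cast h
  exact ⟨(leadingCoeff_divByMonic_of_monic hF hdeg).trans hP.leadingCoeff,
    natDegree_divByMonic P hF⟩

variable (R) in
def offDiagCongrPairs (C D F : R[X]) (a b : ℕ) : Set (R[X] × R[X]) :=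
  {p | p.1 ∈ monicOfDegree R a ∧ p.2 ∈ monicOfDegree R b ∧ F ∣ p.1 * C - p.2 * D ∧
    p.1 * C ≠ p.2 * D}

variable {C D F : R[X]} {a b : ℕ}

lemma finite_offDiagCongrPairs [Finite R] : (offDiagCongrPairs R C D F a b).Finite :=
  ((finite_monicOfDegree a).prod (finite_monicOfDegree b)).subset fun _ hp => ⟨hp.1, hp.2.1⟩

lemma natDegree_le_max_of_mem_offDiagCongrPairs [IsDomain R] (hC : C.Monic) (hD : D.Monic)
    {p : R[X] × R[X]} (hp : p ∈ offDiagCongrPairs R C D F a b) :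
    F.natDegree ≤ max (a + C.natDegree) (b + D.natDegree) := by
  obtain ⟨⟨hA, rfl⟩, ⟨hB, rfl⟩, hdvd, hne⟩ := hp
  calc F.natDegree ≤ (p.1 * C - p.2 * D).natDegree :=
        natDegree_le_of_dvd hdvd (sub_ne_zero.mpr hne)
    _ ≤ max (p.1 * C).natDegree (p.2 * D).natDegree := natDegree_sub_le _ _
    _ = _ := by rw [hA.natDegree_mul hC, hB.natDegree_mul hD]

lemma injOn_divByMonic_offDiagCongrPairs (hC : C.Monic) (hF : F.Monic) :
    InjOn (fun p => (p.2, p.1 * C /ₘ F)) (offDiagCongrPairs R C D F a b) := by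
  rintro ⟨A, B⟩ ⟨-, -, hdvd, -⟩ ⟨A', B'⟩ ⟨-, -, hdvd', -⟩ h
  obtain ⟨rfl, hdiv⟩ := Prod.mk.inj h
  have hmod : A * C %ₘ F = A' * C %ₘ F :=
    (modByMonic_eq_of_dvd_sub hF hdvd).trans (modByMonic_eq_of_dvd_sub hF hdvd').symm
  have hAC : A * C = A' * C := by
    rw [← modByMonic_add_div (A * C) F, ← modByMonic_add_div (A' * C) F, hmod, hdiv]
  rw [hC.isRegular.right hAC]

lemma ncard_offDiagCongrPairs_le [Nontrivial R] [Fintype R] (hC : C.Monic) (hF : F.Monic)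
    (h : F.natDegree ≤ a + C.natDegree) :
    (offDiagCongrPairs R C D F a b).ncard ≤
      Fintype.card R ^ b * Fintype.card R ^ (a + C.natDegree - F.natDegree) := by
  have hmaps : ∀ p ∈ offDiagCongrPairs R C D F a b, (p.2, p.1 * C /ₘ F) ∈
      monicOfDegree R b ×ˢ monicOfDegree R (a + C.natDegree - F.natDegree) := by
    rintro ⟨A, B⟩ ⟨⟨hA, rfl⟩, hB, -⟩
    have hAC := hA.mul hC
    refine ⟨hB, ?_⟩
    rw [← hA.natDegree_mul hC] at h ⊢
    exact hAC.divByMonic_mem_monicOfDegree hF h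
  calc (offDiagCongrPairs R C D F a b).ncard
      ≤ (monicOfDegree R b ×ˢ monicOfDegree R (a + C.natDegree - F.natDegree)).ncard :=
        ncard_le_ncard_of_injOn _ hmaps (injOn_divByMonic_offDiagCongrPairs hC hF)
          ((finite_monicOfDegree b).prod (finite_monicOfDegree _))
    _ ≤ _ := by
        rw [ncard_prod]
        exact Nat.mul_le_mul (ncard_monicOfDegree_le b) (ncard_monicOfDegree_le _)

lemma ncard_offDiagCongrPairs_comm :
    (offDiagCongrPairs R C D F a b).ncard = (offDiagCongrPairs R D C F b a).ncard := by
  rw [← ncard_preimage_of_injective_subset_range Prod.swap_injective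
    (by simp [Prod.swap_surjective.range_eq])]
  congr 1
  ext ⟨A, B⟩
  simp only [offDiagCongrPairs, mem_ofPred_eq, mem_preimage, Prod.swap_prod_mk, dvd_sub_comm,
    ne_comm]
  tauto

lemma ncard_offDiagCongrPairs_mul_le [IsDomain R] [Fintype R] (hC : C.Monic) (hD : D.Monic)
    (hF : F.Monic) :
    (offDiagCongrPairs R C D F a b).ncard * Fintype.card R ^ F.natDegree ≤
      Fintype.card R ^ (a + b + C.natDegree + D.natDegree) := by
  have hq : 1 ≤ Fintype.card R := Fintype.card_pos
  by_cases hac : F.natDegree ≤ a + C.natDegree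
  · calc _ ≤ Fintype.card R ^ b * Fintype.card R ^ (a + C.natDegree - F.natDegree) *
          Fintype.card R ^ F.natDegree :=
          Nat.mul_le_mul_right _ (ncard_offDiagCongrPairs_le hC hF hac)
      _ = Fintype.card R ^ (a + b + C.natDegree) := by
          rw [← pow_add, ← pow_add]; congr 1; omega
      _ ≤ _ := Nat.pow_le_pow_right hq (by omega)
  by_cases hbd : F.natDegree ≤ b + D.natDegree
  · calc _ ≤ Fintype.card R ^ a * Fintype.card R ^ (b + D.natDegree - F.natDegree) *
          Fintype.card R ^ F.natDegree := by
          rw [ncard_offDiagCongrPairs_comm]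
          exact Nat.mul_le_mul_right _ (ncard_offDiagCongrPairs_le hD hF hbd)
      _ = Fintype.card R ^ (a + b + D.natDegree) := by
          rw [← pow_add, ← pow_add]; congr 1; omega
      _ ≤ _ := Nat.pow_le_pow_right hq (by omega)
  have hempty : offDiagCongrPairs R C D F a b = ∅ := eq_empty_of_forall_notMem fun _ hp => by
    have := natDegree_le_max_of_mem_offDiagCongrPairs hC hD hp
    omega
  simp [hempty]

lemma ncard_biUnion_offDiagCongrPairs_mul_le [IsDomain R] [Fintype R] (hC : C.Monic)
    (hD : D.Monic) (hF : F.Monic) (Z : ℕ) :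
    (⋃ a ∈ Finset.range (Z + 1), offDiagCongrPairs R C D F a (Z - a)).ncard *
        Fintype.card R ^ F.natDegree ≤
      (Z + 1) * Fintype.card R ^ (Z + C.natDegree + D.natDegree) :=
  calc _ ≤ (∑ a ∈ Finset.range (Z + 1), (offDiagCongrPairs R C D F a (Z - a)).ncard) *
        Fintype.card R ^ F.natDegree :=
        Nat.mul_le_mul_right _ (Finset.set_ncard_biUnion_le _ _)
    _ = ∑ a ∈ Finset.range (Z + 1),
          (offDiagCongrPairs R C D F a (Z - a)).ncard * Fintype.card R ^ F.natDegree :=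
        Finset.sum_mul ..
    _ ≤ ∑ a ∈ Finset.range (Z + 1), Fintype.card R ^ (Z + C.natDegree + D.natDegree) := by
        refine Finset.sum_le_sum fun a ha => ?_
        have hZ : a + (Z - a) = Z := by rw [Finset.mem_range] at ha; omega
        simpa only [hZ] using ncard_offDiagCongrPairs_mul_le (a := a) (b := Z - a) hC hD hF
    _ = _ := by simp

end OffDiagonal

lemma absP_of_monic {A : Polynomial Fq} (hA : A.Monic) :
    absP A = (Fintype.card Fq : ℝ) ^ A.natDegree :=
  if_neg hA.ne_zero

lemma finsum_mem_inv_sqrt_absP {S : Set (Fq[X] × Fq[X])} (hS : S.Finite) {Z : ℕ}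
    (hZ : ∀ p ∈ S, (p.1 * p.2).Monic ∧ (p.1 * p.2).natDegree = Z) :
    ∑ᶠ p ∈ S, (√(absP (p.1 * p.2)))⁻¹ =
      S.ncard / (Fintype.card Fq : ℝ) ^ ((Z : ℝ) / 2) := by
  have hterm : ∀ p ∈ S,
      (√(absP (p.1 * p.2)))⁻¹ = ((Fintype.card Fq : ℝ) ^ ((Z : ℝ) / 2))⁻¹ := by
    intro p hp
    rw [absP_of_monic (hZ p hp).1, (hZ p hp).2, Real.sqrt_eq_rpow, ← Real.rpow_natCast,
      ← Real.rpow_mul (Nat.cast_nonneg _)]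
    ring_nf
  rw [finsum_mem_congr rfl hterm, finsum_mem_eq_finite_toFinset_sum _ hS, Finset.sum_const,
    ncard_eq_toFinset_card S hS, nsmul_eq_mul, div_eq_mul_inv _ (_ ^ _)]

lemma finsum_mem_inv_sqrt_absP_le {C D F : Fq[X]} (hC : C.Monic) (hD : D.Monic) (hF : F.Monic)
    {Z : ℕ} {S : Set (Fq[X] × Fq[X])}
    (hS : S ⊆ ⋃ a ∈ Finset.range (Z + 1), offDiagCongrPairs Fq C D F a (Z - a)) :
    ∑ᶠ p ∈ S, (√(absP (p.1 * p.2)))⁻¹ ≤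
      (Fintype.card Fq : ℝ) ^ ((Z : ℝ) / 2) * ((Z : ℝ) + 1) * absP (C * D) / absP F := by
  set q := Fintype.card Fq
  have hq : (0 : ℝ) < q := by exact_mod_cast Fintype.card_pos
  have hU : (⋃ a ∈ Finset.range (Z + 1), offDiagCongrPairs Fq C D F a (Z - a)).Finite :=
    (Finset.range (Z + 1)).finite_toSet.biUnion fun _ _ => finite_offDiagCongrPairs
  have hdeg : ∀ p ∈ S, (p.1 * p.2).Monic ∧ (p.1 * p.2).natDegree = Z := by
    intro p hp
    obtain ⟨a, ha, ⟨hA, rfl⟩, ⟨hB, hb⟩, -⟩ := mem_iUnion₂.mp (hS hp)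
    rw [Finset.mem_range] at ha
    exact ⟨hA.mul hB, by rw [hA.natDegree_mul hB, hb]; omega⟩
  have hcount :
      (S.ncard : ℝ) * q ^ F.natDegree ≤ (Z + 1) * q ^ (Z + C.natDegree + D.natDegree) :=
    mod_cast (Nat.mul_le_mul_right _ (ncard_le_ncard hS hU)).trans
      (ncard_biUnion_offDiagCongrPairs_mul_le hC hD hF Z)
  set r := (q : ℝ) ^ ((Z : ℝ) / 2)
  have hr : 0 < r := Real.rpow_pos_of_pos hq _
  have hrr : r * r = (q : ℝ) ^ Z := by
    rw [← Real.rpow_add hq, ← Real.rpow_natCast]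
    ring_nf
  rw [finsum_mem_inv_sqrt_absP (hU.subset hS) hdeg, absP_of_monic (hC.mul hD), absP_of_monic hF,
    hC.natDegree_mul hD, div_le_div_iff₀ hr (pow_pos hq _)]
  calc (S.ncard : ℝ) * q ^ F.natDegree ≤ (Z + 1) * q ^ (Z + C.natDegree + D.natDegree) := hcount
    _ = r * (Z + 1) * q ^ (C.natDegree + D.natDegree) * r := by
      rw [add_assoc, pow_add, ← hrr]; ring

/-- **Off-diagonal bound for twisted congruence sums**, with an absolute implied
constant. -/
theorem off_diagonal_congruence_bound :
    ∃ Cst : ℝ, 0 < Cst ∧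
      ∀ (Fq : Type) [Field Fq] [Fintype Fq],
        ∀ X : ℕ, ∀ R : Polynomial Fq, R.Monic →
          ∀ Z₁ : ℕ, Z₁ ≤ R.natDegree →
            ∀ F : Polynomial Fq, F.Monic → F ∣ R →
              ∀ C D : Polynomial Fq, SmoothM X C → SmoothM X D →
                10 * C.natDegree ≤ R.natDegree → 10 * D.natDegree ≤ R.natDegree →
                  (∑ᶠ p ∈ {p : Polynomial Fq × Polynomial Fq |
                      p.1.Monic ∧ p.2.Monic ∧ (p.1 * p.2).natDegree = Z₁ ∧
                      F ∣ (p.1 * C - p.2 * D) ∧ p.1 * C ≠ p.2 * D ∧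
                      IsCoprime (p.1 * p.2) R},
                    (Real.sqrt (absP (p.1 * p.2)))⁻¹) ≤
                  Cst * ((Fintype.card Fq : ℝ) ^ ((Z₁ : ℝ) / 2) * ((Z₁ : ℝ) + 1) *
                    absP (C * D) / absP F) := by
  refine ⟨1, one_pos, fun Fq _ _ X R _ Z₁ _ F hF _ C D hC hD _ _ => ?_⟩
  rw [one_mul]
  refine finsum_mem_inv_sqrt_absP_le hC.1 hD.1 hF fun p ⟨hA, hB, hdeg, hdvd, hne, _⟩ => ?_
  rw [hA.natDegree_mul hB] at hdeg
  exact mem_biUnion (x := p.1.natDegree) (Finset.mem_coe.mpr (Finset.mem_range.mpr (by omega)))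
    ⟨⟨hA, rfl⟩, ⟨hB, by omega⟩, hdvd, hne⟩

end FFEH
end
end

section
/- Canonical decomposition of solutions of A₁A₂A₃ = B₁B₂B₃: Suppose A₁, A₂, A₃, B₁, B₂, B₃ ∈ ℳ satisfy A₁A₂A₃ = B₁B₂B₃. Then there exist G₁, G₂, G₃, V_{1,2}, V_{1,3}, V_{2,1}, V_{2,3}, V_{3,1}, V_{3,2} ∈ ℳ, with gcd(V_{i,j}, V_{k,l}) = 1 whenever both i ≠ k and j ≠ l, such that A₁ = G₁V_{1,2}V_{1,3}, B₁ = G₁V_{2,1}V_{3,1}, A₂ = G₂V_{2,1}V_{2,3}, B₂ = G₂V_{1,2}V_{3,2}, A₃ = G₃V_{3,1}V_{3,2}, B₃ = G₃V_{1,3}V_{2,3}. Moreover this correspondence is bijective: such a tuple (G₁,G₂,G₃,V_{1,2},V_{1,3},V_{2,1},V_{2,3},V_{3,1},V_{3,2}) is uniquely determined by (A₁,A₂,A₃,B₁,B₂,B₃); in particular G_i = gcd(A_i, B_i) for each i. -/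
open scoped BigOperators
open Filter

noncomputable section

namespace FFEH

variable {Fq : Type} [Field Fq] [Fintype Fq]

section Aux

variable {Fq : Type} [Field Fq] [Fintype Fq]

private lemma key_dvd {R : Type*} [CommRing R] {d x y z : R} (h1 : d ∣ x * y)
    (h2 : d ∣ x * z) (h : IsCoprime y z) : d ∣ x := by
  obtain ⟨a, b, hab⟩ := h
  have hx : x = a * (x * y) + b * (x * z) := by linear_combination (-x) * hab
  rw [hx]
  exact dvd_add (h1.mul_left a) (h2.mul_left b)

open Classical in
private lemma gcdP_dvd_gcd (A B : Polynomial Fq) : gcdP A B ∣ EuclideanDomain.gcd A B := by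
  by_cases hg : EuclideanDomain.gcd A B = 0
  · unfold gcdP; rw [hg]; simp
  · refine ⟨Polynomial.C (EuclideanDomain.gcd A B).leadingCoeff, ?_⟩
    unfold gcdP
    rw [mul_right_comm, ← Polynomial.C_mul,
      inv_mul_cancel₀ (Polynomial.leadingCoeff_ne_zero.mpr hg), Polynomial.C_1, one_mul]

open Classical in
private lemma gcd_dvd_gcdP (A B : Polynomial Fq) : EuclideanDomain.gcd A B ∣ gcdP A B := by
  unfold gcdP; exact dvd_mul_left _ _

open Classical in
private lemma gcdP_dvd_left (A B : Polynomial Fq) : gcdP A B ∣ A :=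
  (gcdP_dvd_gcd A B).trans (EuclideanDomain.gcd_dvd_left A B)

open Classical in
private lemma gcdP_dvd_right (A B : Polynomial Fq) : gcdP A B ∣ B :=
  (gcdP_dvd_gcd A B).trans (EuclideanDomain.gcd_dvd_right A B)

open Classical in
private lemma dvd_gcdP {A B d : Polynomial Fq} (hA : d ∣ A) (hB : d ∣ B) : d ∣ gcdP A B :=
  (EuclideanDomain.dvd_gcd hA hB).trans (gcd_dvd_gcdP A B)

open Classical in
private lemma gcdP_monic {A : Polynomial Fq} (B : Polynomial Fq) (hA : A ≠ 0) :
    (gcdP A B).Monic := by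
  have hg : EuclideanDomain.gcd A B ≠ 0 := by
    intro h
    exact hA (EuclideanDomain.gcd_eq_zero_iff.mp h).1
  unfold gcdP
  unfold Polynomial.Monic
  rw [Polynomial.leadingCoeff_mul, Polynomial.leadingCoeff_C,
    inv_mul_cancel₀ (Polynomial.leadingCoeff_ne_zero.mpr hg)]

/-- If `A = G u v`, `B = G w x` with `uv` coprime to `wx`, then `G = gcd(A,B)` (monic form). -/
private lemma eq_gcdP_of {G u v w x A B : Polynomial Fq} (hG : G.Monic) (hu : u.Monic)
    (hv : v.Monic) (hw : w.Monic) (hx : x.Monic) (hA : A = G * u * v) (hB : B = G * w * x)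
    (hcop : IsCoprime (u * v) (w * x)) : G = gcdP A B := by
  have hGz : G ≠ 0 := hG.ne_zero
  have hAz : A ≠ 0 := by rw [hA]; exact ((hG.mul hu).mul hv).ne_zero
  have h1 : G ∣ gcdP A B :=
    dvd_gcdP ⟨u * v, by rw [hA]; ring⟩ ⟨w * x, by rw [hB]; ring⟩
  obtain ⟨E, hE⟩ := h1
  have h2 : G * E ∣ G * (u * v) := by
    rw [← hE]
    exact (gcdP_dvd_left A B).trans ⟨1, by rw [hA]; ring⟩
  have h3 : G * E ∣ G * (w * x) := by
    rw [← hE]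
    exact (gcdP_dvd_right A B).trans ⟨1, by rw [hB]; ring⟩
  have hEuv : E ∣ u * v := (mul_dvd_mul_iff_left hGz).mp h2
  have hEwx : E ∣ w * x := (mul_dvd_mul_iff_left hGz).mp h3
  have hEunit : IsUnit E := hcop.isUnit_of_dvd' hEuv hEwx
  have hassoc : Associated G (gcdP A B) := ⟨hEunit.unit, by rw [hEunit.unit_spec, ← hE]⟩
  exact Polynomial.eq_of_monic_of_associated hG (gcdP_monic B hAz) hassoc

private lemma decomp3_gcds {A1 A2 A3 B1 B2 B3 G1 G2 G3 V12 V13 V21 V23 V31 V32 : Polynomial Fq}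
    (hd : Decomp3 A1 A2 A3 B1 B2 B3 G1 G2 G3 V12 V13 V21 V23 V31 V32) :
    G1 = gcdP A1 B1 ∧ G2 = gcdP A2 B2 ∧ G3 = gcdP A3 B3 := by
  obtain ⟨m1, m2, m3, m4, m5, m6, m7, m8, m9, c1, c2, c3, c4, c5, c6, c7, c8, c9,
    e1, e2, e3, e4, e5, e6⟩ := hd
  refine ⟨eq_gcdP_of m1 m4 m5 m6 m8 e1 e2 ?_, eq_gcdP_of m2 m6 m7 m4 m9 e3 e4 ?_,
    eq_gcdP_of m3 m8 m9 m5 m7 e5 e6 ?_⟩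
  · exact IsCoprime.mul_left (IsCoprime.mul_right c1 c3) (IsCoprime.mul_right c4 c5)
  · exact IsCoprime.mul_left (IsCoprime.mul_right c1.symm c7) (IsCoprime.mul_right c2.symm c9)
  · exact IsCoprime.mul_left (IsCoprime.mul_right c5.symm c8.symm)
      (IsCoprime.mul_right c6.symm c9.symm)

private lemma decomp3_unique {A1 A2 A3 B1 B2 B3 G1 G2 G3 V12 V13 V21 V23 V31 V32
    H1 H2 H3 W12 W13 W21 W23 W31 W32 : Polynomial Fq}
    (hd : Decomp3 A1 A2 A3 B1 B2 B3 G1 G2 G3 V12 V13 V21 V23 V31 V32)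
    (hd' : Decomp3 A1 A2 A3 B1 B2 B3 H1 H2 H3 W12 W13 W21 W23 W31 W32) :
    H1 = G1 ∧ H2 = G2 ∧ H3 = G3 ∧ W12 = V12 ∧ W13 = V13 ∧ W21 = V21 ∧ W23 = V23 ∧
      W31 = V31 ∧ W32 = V32 := by
  obtain ⟨hG1, hG2, hG3⟩ := decomp3_gcds hd
  obtain ⟨hH1, hH2, hH3⟩ := decomp3_gcds hd'
  have eG1 : H1 = G1 := by rw [hG1, hH1]
  have eG2 : H2 = G2 := by rw [hG2, hH2]
  have eG3 : H3 = G3 := by rw [hG3, hH3]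
  obtain ⟨m1, m2, m3, m4, m5, m6, m7, m8, m9, c1, c2, c3, c4, c5, c6, c7, c8, c9,
    e1, e2, e3, e4, e5, e6⟩ := hd
  obtain ⟨n1, n2, n3, n4, n5, n6, n7, n8, n9, d1, d2, d3, d4, d5, d6, d7, d8, d9,
    f1, f2, f3, f4, f5, f6⟩ := hd'
  rw [eG1] at f1 f2
  rw [eG2] at f3 f4
  rw [eG3] at f5 f6
  have hG1z : G1 ≠ 0 := m1.ne_zero
  have hG2z : G2 ≠ 0 := m2.ne_zero
  have hG3z : G3 ≠ 0 := m3.ne_zero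
  have q1 : W12 * W13 = V12 * V13 :=
    mul_left_cancel₀ hG1z (by linear_combination e1 - f1)
  have q2 : W21 * W31 = V21 * V31 :=
    mul_left_cancel₀ hG1z (by linear_combination e2 - f2)
  have q3 : W21 * W23 = V21 * V23 :=
    mul_left_cancel₀ hG2z (by linear_combination e3 - f3)
  have q4 : W12 * W32 = V12 * V32 :=
    mul_left_cancel₀ hG2z (by linear_combination e4 - f4)
  have q5 : W31 * W32 = V31 * V32 :=
    mul_left_cancel₀ hG3z (by linear_combination e5 - f5)
  have q6 : W13 * W23 = V13 * V23 :=
    mul_left_cancel₀ hG3z (by linear_combination e6 - f6)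
  -- W12 = V12
  have e12 : W12 = V12 := by
    have hd1 : W12 ∣ V12 :=
      key_dvd ⟨W13, q1.symm⟩ ⟨W32, q4.symm⟩ c6
    have hd2 : V12 ∣ W12 :=
      key_dvd ⟨V13, q1⟩ ⟨V32, q4⟩ d6
    exact Polynomial.eq_of_monic_of_associated n4 m4 (associated_of_dvd_dvd hd1 hd2)
  have e21 : W21 = V21 := by
    have hd1 : W21 ∣ V21 :=
      key_dvd ⟨W23, q3.symm⟩ ⟨W31, q2.symm⟩ c8
    have hd2 : V21 ∣ W21 :=
      key_dvd ⟨V23, q3⟩ ⟨V31, q2⟩ d8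
    exact Polynomial.eq_of_monic_of_associated n6 m6 (associated_of_dvd_dvd hd1 hd2)
  have e13 : W13 = V13 := by
    rw [e12] at q1
    exact mul_left_cancel₀ m4.ne_zero q1
  have e31 : W31 = V31 := by
    rw [e21] at q2
    exact mul_left_cancel₀ m6.ne_zero q2
  have e23 : W23 = V23 := by
    rw [e21] at q3
    exact mul_left_cancel₀ m6.ne_zero q3
  have e32 : W32 = V32 := by
    rw [e12] at q4
    exact mul_left_cancel₀ m4.ne_zero q4
  exact ⟨eG1, eG2, eG3, e12, e13, e21, e23, e31, e32⟩

private lemma coprime_of_irred_not_dvd {P W : Polynomial Fq} (h : Irreducible P)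
    (hnd : ¬ P ∣ W) : IsCoprime P W :=
  h.coprime_iff_not_dvd.mpr hnd

private lemma stepA1 {P C D A1 A2 A3 B1 B2 B3 G1 G2 G3 V12 V13 V21 V23 V31 V32 : Polynomial Fq}
    (hP : P.Monic) (hA : A1 = P * C) (hB : B1 = P * D)
    (hd : Decomp3 C A2 A3 D B2 B3 G1 G2 G3 V12 V13 V21 V23 V31 V32) :
    Decomp3 A1 A2 A3 B1 B2 B3 (P * G1) G2 G3 V12 V13 V21 V23 V31 V32 := by
  obtain ⟨m1, m2, m3, m4, m5, m6, m7, m8, m9, c1, c2, c3, c4, c5, c6, c7, c8, c9,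
    e1, e2, e3, e4, e5, e6⟩ := hd
  exact ⟨hP.mul m1, m2, m3, m4, m5, m6, m7, m8, m9, c1, c2, c3, c4, c5, c6, c7, c8, c9,
    by rw [hA, e1]; ring, by rw [hB, e2]; ring, e3, e4, e5, e6⟩

private lemma stepA2 {P C D A1 A2 A3 B1 B2 B3 G1 G2 G3 V12 V13 V21 V23 V31 V32 : Polynomial Fq}
    (hP : P.Monic) (hA : A2 = P * C) (hB : B2 = P * D)
    (hd : Decomp3 A1 C A3 B1 D B3 G1 G2 G3 V12 V13 V21 V23 V31 V32) :
    Decomp3 A1 A2 A3 B1 B2 B3 G1 (P * G2) G3 V12 V13 V21 V23 V31 V32 := by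
  obtain ⟨m1, m2, m3, m4, m5, m6, m7, m8, m9, c1, c2, c3, c4, c5, c6, c7, c8, c9,
    e1, e2, e3, e4, e5, e6⟩ := hd
  exact ⟨m1, hP.mul m2, m3, m4, m5, m6, m7, m8, m9, c1, c2, c3, c4, c5, c6, c7, c8, c9,
    e1, e2, by rw [hA, e3]; ring, by rw [hB, e4]; ring, e5, e6⟩

private lemma stepA3 {P C D A1 A2 A3 B1 B2 B3 G1 G2 G3 V12 V13 V21 V23 V31 V32 : Polynomial Fq}
    (hP : P.Monic) (hA : A3 = P * C) (hB : B3 = P * D)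
    (hd : Decomp3 A1 A2 C B1 B2 D G1 G2 G3 V12 V13 V21 V23 V31 V32) :
    Decomp3 A1 A2 A3 B1 B2 B3 G1 G2 (P * G3) V12 V13 V21 V23 V31 V32 := by
  obtain ⟨m1, m2, m3, m4, m5, m6, m7, m8, m9, c1, c2, c3, c4, c5, c6, c7, c8, c9,
    e1, e2, e3, e4, e5, e6⟩ := hd
  exact ⟨m1, m2, hP.mul m3, m4, m5, m6, m7, m8, m9, c1, c2, c3, c4, c5, c6, c7, c8, c9,
    e1, e2, e3, e4, by rw [hA, e5]; ring, by rw [hB, e6]; ring⟩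

private lemma stepB12 {P C D A1 A2 A3 B1 B2 B3 G1 G2 G3 V12 V13 V21 V23 V31 V32 : Polynomial Fq}
    (hP : P.Monic) (hirr : Irreducible P) (hA : A1 = P * C) (hB : B2 = P * D)
    (hnAj : ¬ P ∣ A2) (hnBi : ¬ P ∣ B1)
    (hd : Decomp3 C A2 A3 B1 D B3 G1 G2 G3 V12 V13 V21 V23 V31 V32) :
    Decomp3 A1 A2 A3 B1 B2 B3 G1 G2 G3 (P * V12) V13 V21 V23 V31 V32 := by
  obtain ⟨m1, m2, m3, m4, m5, m6, m7, m8, m9, c1, c2, c3, c4, c5, c6, c7, c8, c9,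
    e1, e2, e3, e4, e5, e6⟩ := hd
  have h21 : IsCoprime P V21 := coprime_of_irred_not_dvd hirr
    (fun h => hnAj (h.trans ⟨G2 * V23, by rw [e3]; ring⟩))
  have h23 : IsCoprime P V23 := coprime_of_irred_not_dvd hirr
    (fun h => hnAj (h.trans ⟨G2 * V21, by rw [e3]; ring⟩))
  have h31 : IsCoprime P V31 := coprime_of_irred_not_dvd hirr
    (fun h => hnBi (h.trans ⟨G1 * V21, by rw [e2]; ring⟩))
  exact ⟨m1, m2, m3, hP.mul m4, m5, m6, m7, m8, m9,
    h21.mul_left c1, h23.mul_left c2, h31.mul_left c3, c4, c5, c6, c7, c8, c9,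
    by rw [hA, e1]; ring, e2, e3, by rw [hB, e4]; ring, e5, e6⟩

private lemma stepB13 {P C D A1 A2 A3 B1 B2 B3 G1 G2 G3 V12 V13 V21 V23 V31 V32 : Polynomial Fq}
    (hP : P.Monic) (hirr : Irreducible P) (hA : A1 = P * C) (hB : B3 = P * D)
    (hnAj : ¬ P ∣ A3) (hnBi : ¬ P ∣ B1)
    (hd : Decomp3 C A2 A3 B1 B2 D G1 G2 G3 V12 V13 V21 V23 V31 V32) :
    Decomp3 A1 A2 A3 B1 B2 B3 G1 G2 G3 V12 (P * V13) V21 V23 V31 V32 := by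
  obtain ⟨m1, m2, m3, m4, m5, m6, m7, m8, m9, c1, c2, c3, c4, c5, c6, c7, c8, c9,
    e1, e2, e3, e4, e5, e6⟩ := hd
  have h21 : IsCoprime P V21 := coprime_of_irred_not_dvd hirr
    (fun h => hnBi (h.trans ⟨G1 * V31, by rw [e2]; ring⟩))
  have h31 : IsCoprime P V31 := coprime_of_irred_not_dvd hirr
    (fun h => hnAj (h.trans ⟨G3 * V32, by rw [e5]; ring⟩))
  have h32 : IsCoprime P V32 := coprime_of_irred_not_dvd hirr
    (fun h => hnAj (h.trans ⟨G3 * V31, by rw [e5]; ring⟩))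
  exact ⟨m1, m2, m3, m4, hP.mul m5, m6, m7, m8, m9,
    c1, c2, c3, h21.mul_left c4, h31.mul_left c5, h32.mul_left c6, c7, c8, c9,
    by rw [hA, e1]; ring, e2, e3, e4, e5, by rw [hB, e6]; ring⟩

private lemma stepB21 {P C D A1 A2 A3 B1 B2 B3 G1 G2 G3 V12 V13 V21 V23 V31 V32 : Polynomial Fq}
    (hP : P.Monic) (hirr : Irreducible P) (hA : A2 = P * C) (hB : B1 = P * D)
    (hnAj : ¬ P ∣ A1) (hnBi : ¬ P ∣ B2)
    (hd : Decomp3 A1 C A3 D B2 B3 G1 G2 G3 V12 V13 V21 V23 V31 V32) :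
    Decomp3 A1 A2 A3 B1 B2 B3 G1 G2 G3 V12 V13 (P * V21) V23 V31 V32 := by
  obtain ⟨m1, m2, m3, m4, m5, m6, m7, m8, m9, c1, c2, c3, c4, c5, c6, c7, c8, c9,
    e1, e2, e3, e4, e5, e6⟩ := hd
  have h12 : IsCoprime P V12 := coprime_of_irred_not_dvd hirr
    (fun h => hnAj (h.trans ⟨G1 * V13, by rw [e1]; ring⟩))
  have h13 : IsCoprime P V13 := coprime_of_irred_not_dvd hirr
    (fun h => hnAj (h.trans ⟨G1 * V12, by rw [e1]; ring⟩))
  have h32 : IsCoprime P V32 := coprime_of_irred_not_dvd hirr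
    (fun h => hnBi (h.trans ⟨G2 * V12, by rw [e4]; ring⟩))
  exact ⟨m1, m2, m3, m4, m5, hP.mul m6, m7, m8, m9,
    h12.symm.mul_right c1, c2, c3, h13.symm.mul_right c4, c5, c6, h32.mul_left c7, c8, c9,
    e1, by rw [hB, e2]; ring, by rw [hA, e3]; ring, e4, e5, e6⟩

private lemma stepB23 {P C D A1 A2 A3 B1 B2 B3 G1 G2 G3 V12 V13 V21 V23 V31 V32 : Polynomial Fq}
    (hP : P.Monic) (hirr : Irreducible P) (hA : A2 = P * C) (hB : B3 = P * D)
    (hnAj : ¬ P ∣ A3) (hnBi : ¬ P ∣ B2)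
    (hd : Decomp3 A1 C A3 B1 B2 D G1 G2 G3 V12 V13 V21 V23 V31 V32) :
    Decomp3 A1 A2 A3 B1 B2 B3 G1 G2 G3 V12 V13 V21 (P * V23) V31 V32 := by
  obtain ⟨m1, m2, m3, m4, m5, m6, m7, m8, m9, c1, c2, c3, c4, c5, c6, c7, c8, c9,
    e1, e2, e3, e4, e5, e6⟩ := hd
  have h12 : IsCoprime P V12 := coprime_of_irred_not_dvd hirr
    (fun h => hnBi (h.trans ⟨G2 * V32, by rw [e4]; ring⟩))
  have h31 : IsCoprime P V31 := coprime_of_irred_not_dvd hirr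
    (fun h => hnAj (h.trans ⟨G3 * V32, by rw [e5]; ring⟩))
  have h32 : IsCoprime P V32 := coprime_of_irred_not_dvd hirr
    (fun h => hnAj (h.trans ⟨G3 * V31, by rw [e5]; ring⟩))
  exact ⟨m1, m2, m3, m4, m5, m6, hP.mul m7, m8, m9,
    c1, h12.symm.mul_right c2, c3, c4, c5, c6, c7, h31.mul_left c8, h32.mul_left c9,
    e1, e2, by rw [hA, e3]; ring, e4, e5, by rw [hB, e6]; ring⟩

private lemma stepB31 {P C D A1 A2 A3 B1 B2 B3 G1 G2 G3 V12 V13 V21 V23 V31 V32 : Polynomial Fq}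
    (hP : P.Monic) (hirr : Irreducible P) (hA : A3 = P * C) (hB : B1 = P * D)
    (hnAj : ¬ P ∣ A1) (hnBi : ¬ P ∣ B3)
    (hd : Decomp3 A1 A2 C D B2 B3 G1 G2 G3 V12 V13 V21 V23 V31 V32) :
    Decomp3 A1 A2 A3 B1 B2 B3 G1 G2 G3 V12 V13 V21 V23 (P * V31) V32 := by
  obtain ⟨m1, m2, m3, m4, m5, m6, m7, m8, m9, c1, c2, c3, c4, c5, c6, c7, c8, c9,
    e1, e2, e3, e4, e5, e6⟩ := hd
  have h12 : IsCoprime P V12 := coprime_of_irred_not_dvd hirr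
    (fun h => hnAj (h.trans ⟨G1 * V13, by rw [e1]; ring⟩))
  have h13 : IsCoprime P V13 := coprime_of_irred_not_dvd hirr
    (fun h => hnAj (h.trans ⟨G1 * V12, by rw [e1]; ring⟩))
  have h23 : IsCoprime P V23 := coprime_of_irred_not_dvd hirr
    (fun h => hnBi (h.trans ⟨G3 * V13, by rw [e6]; ring⟩))
  exact ⟨m1, m2, m3, m4, m5, m6, m7, hP.mul m8, m9,
    c1, c2, h12.symm.mul_right c3, c4, h13.symm.mul_right c5, c6, c7,
    h23.symm.mul_right c8, c9,
    e1, by rw [hB, e2]; ring, e3, e4, by rw [hA, e5]; ring, e6⟩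

private lemma stepB32 {P C D A1 A2 A3 B1 B2 B3 G1 G2 G3 V12 V13 V21 V23 V31 V32 : Polynomial Fq}
    (hP : P.Monic) (hirr : Irreducible P) (hA : A3 = P * C) (hB : B2 = P * D)
    (hnAj : ¬ P ∣ A2) (hnBi : ¬ P ∣ B3)
    (hd : Decomp3 A1 A2 C B1 D B3 G1 G2 G3 V12 V13 V21 V23 V31 V32) :
    Decomp3 A1 A2 A3 B1 B2 B3 G1 G2 G3 V12 V13 V21 V23 V31 (P * V32) := by
  obtain ⟨m1, m2, m3, m4, m5, m6, m7, m8, m9, c1, c2, c3, c4, c5, c6, c7, c8, c9,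
    e1, e2, e3, e4, e5, e6⟩ := hd
  have h13 : IsCoprime P V13 := coprime_of_irred_not_dvd hirr
    (fun h => hnBi (h.trans ⟨G3 * V23, by rw [e6]; ring⟩))
  have h21 : IsCoprime P V21 := coprime_of_irred_not_dvd hirr
    (fun h => hnAj (h.trans ⟨G2 * V23, by rw [e3]; ring⟩))
  have h23 : IsCoprime P V23 := coprime_of_irred_not_dvd hirr
    (fun h => hnAj (h.trans ⟨G2 * V21, by rw [e3]; ring⟩))
  exact ⟨m1, m2, m3, m4, m5, m6, m7, m8, hP.mul m9,
    c1, c2, c3, c4, c5, h13.symm.mul_right c6, h21.symm.mul_right c7, c8,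
    h23.symm.mul_right c9,
    e1, e2, e3, by rw [hB, e4]; ring, by rw [hA, e5]; ring, e6⟩

private lemma exists_decomp3 : ∀ (N : ℕ) (A1 A2 A3 B1 B2 B3 : Polynomial Fq),
    A1.Monic → A2.Monic → A3.Monic → B1.Monic → B2.Monic → B3.Monic →
    A1 * A2 * A3 = B1 * B2 * B3 → (A1 * A2 * A3).natDegree < N →
    ∃ G1 G2 G3 V12 V13 V21 V23 V31 V32 : Polynomial Fq,
      Decomp3 A1 A2 A3 B1 B2 B3 G1 G2 G3 V12 V13 V21 V23 V31 V32 := by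
  intro N
  induction N with
  | zero => intro A1 A2 A3 B1 B2 B3 _ _ _ _ _ _ _ hdeg; omega
  | succ N ih =>
    intro A1 A2 A3 B1 B2 B3 h1 h2 h3 h4 h5 h6 heq hdeg
    have hz1 : A1 ≠ 0 := h1.ne_zero
    have hz2 : A2 ≠ 0 := h2.ne_zero
    have hz3 : A3 ≠ 0 := h3.ne_zero
    have hz : A1 * A2 * A3 ≠ 0 := mul_ne_zero (mul_ne_zero hz1 hz2) hz3
    by_cases h0 : (A1 * A2 * A3).natDegree = 0
    · have hd0 : A1.natDegree = 0 ∧ A2.natDegree = 0 ∧ A3.natDegree = 0 := by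
        rw [Polynomial.natDegree_mul (mul_ne_zero hz1 hz2) hz3,
          Polynomial.natDegree_mul hz1 hz2] at h0
        omega
      have hA1 : A1 = 1 := Polynomial.eq_one_of_monic_natDegree_zero h1 hd0.1
      have hA2 : A2 = 1 := Polynomial.eq_one_of_monic_natDegree_zero h2 hd0.2.1
      have hA3 : A3 = 1 := Polynomial.eq_one_of_monic_natDegree_zero h3 hd0.2.2
      have h0' : (B1 * B2 * B3).natDegree = 0 := by rw [← heq]; exact h0
      have hzB : B1 ≠ 0 := h4.ne_zero
      have hzB2 : B2 ≠ 0 := h5.ne_zero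
      have hzB3 : B3 ≠ 0 := h6.ne_zero
      have hd0' : B1.natDegree = 0 ∧ B2.natDegree = 0 ∧ B3.natDegree = 0 := by
        rw [Polynomial.natDegree_mul (mul_ne_zero hzB hzB2) hzB3,
          Polynomial.natDegree_mul hzB hzB2] at h0'
        omega
      have hB1 : B1 = 1 := Polynomial.eq_one_of_monic_natDegree_zero h4 hd0'.1
      have hB2 : B2 = 1 := Polynomial.eq_one_of_monic_natDegree_zero h5 hd0'.2.1
      have hB3 : B3 = 1 := Polynomial.eq_one_of_monic_natDegree_zero h6 hd0'.2.2
      refine ⟨1, 1, 1, 1, 1, 1, 1, 1, 1, ?_⟩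
      rw [hA1, hA2, hA3, hB1, hB2, hB3]
      exact ⟨Polynomial.monic_one, Polynomial.monic_one, Polynomial.monic_one,
        Polynomial.monic_one, Polynomial.monic_one, Polynomial.monic_one,
        Polynomial.monic_one, Polynomial.monic_one, Polynomial.monic_one,
        isCoprime_one_left, isCoprime_one_left, isCoprime_one_left,
        isCoprime_one_left, isCoprime_one_left, isCoprime_one_left,
        isCoprime_one_left, isCoprime_one_left, isCoprime_one_left,
        by ring, by ring, by ring, by ring, by ring, by ring⟩
    · have hnu : ¬ IsUnit (A1 * A2 * A3) := fun h =>
        h0 (Polynomial.natDegree_eq_zero_of_isUnit h)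
      obtain ⟨Q, hQirr, hQdvd⟩ := WfDvdMonoid.exists_irreducible_factor hnu hz
      have hQz : Q ≠ 0 := hQirr.ne_zero
      set P : Polynomial Fq := Polynomial.C (Q.leadingCoeff)⁻¹ * Q with hPdef
      have hUnit : IsUnit (Polynomial.C (Q.leadingCoeff)⁻¹) :=
        Polynomial.isUnit_C.mpr (IsUnit.mk0 _
          (inv_ne_zero (Polynomial.leadingCoeff_ne_zero.mpr hQz)))
      have hPassoc : Associated Q P := by
        rw [hPdef, mul_comm]
        exact (associated_mul_unit_right Q _ hUnit)
      have hPm : P.Monic := by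
        rw [hPdef]
        unfold Polynomial.Monic
        rw [Polynomial.leadingCoeff_mul, Polynomial.leadingCoeff_C,
          inv_mul_cancel₀ (Polynomial.leadingCoeff_ne_zero.mpr hQz)]
      have hPirr : Irreducible P := hPassoc.irreducible hQirr
      have hPz : P ≠ 0 := hPm.ne_zero
      have hPdvd : P ∣ A1 * A2 * A3 := (hPassoc.symm.dvd).trans hQdvd
      have hPprime : Prime P := hPirr.prime
      have hPdvdB : P ∣ B1 * B2 * B3 := heq ▸ hPdvd
      have hdA : P ∣ A1 ∨ P ∣ A2 ∨ P ∣ A3 := by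
        rcases (hPprime.dvd_mul.mp hPdvd) with h | h
        · rcases (hPprime.dvd_mul.mp h) with h' | h'
          · exact Or.inl h'
          · exact Or.inr (Or.inl h')
        · exact Or.inr (Or.inr h)
      have hdB : P ∣ B1 ∨ P ∣ B2 ∨ P ∣ B3 := by
        rcases (hPprime.dvd_mul.mp hPdvdB) with h | h
        · rcases (hPprime.dvd_mul.mp h) with h' | h'
          · exact Or.inl h'
          · exact Or.inr (Or.inl h')
        · exact Or.inr (Or.inr h)
      have hPdeg : 1 ≤ P.natDegree := by
        by_contra hcon
        push_neg at hcon
        exact hPirr.not_isUnit (by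
          rw [Polynomial.eq_one_of_monic_natDegree_zero hPm (by omega)]
          exact isUnit_one)
      -- degree-reduction helper
      have degred : ∀ X Y : Polynomial Fq, X ≠ 0 → A1 * A2 * A3 = P * X →
          X.natDegree < N := by
        intro X Y hXz hX
        rw [hX, Polynomial.natDegree_mul hPz hXz] at hdeg
        omega
      by_cases hc1 : P ∣ A1 ∧ P ∣ B1
      · obtain ⟨C1, hC1⟩ := hc1.1
        obtain ⟨D1, hD1⟩ := hc1.2
        have hC1m : C1.Monic := hPm.of_mul_monic_left (hC1 ▸ h1)
        have hD1m : D1.Monic := hPm.of_mul_monic_left (hD1 ▸ h4)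
        have heq' : C1 * A2 * A3 = D1 * B2 * B3 := by
          apply mul_left_cancel₀ hPz
          rw [hC1, hD1] at heq
          linear_combination heq
        have hdeg' : (C1 * A2 * A3).natDegree < N :=
          degred _ 0 (mul_ne_zero (mul_ne_zero hC1m.ne_zero hz2) hz3)
            (by rw [hC1]; ring)
        obtain ⟨G1, G2, G3, V12, V13, V21, V23, V31, V32, hd⟩ :=
          ih C1 A2 A3 D1 B2 B3 hC1m h2 h3 hD1m h5 h6 heq' hdeg'
        exact ⟨P * G1, G2, G3, V12, V13, V21, V23, V31, V32, stepA1 hPm hC1 hD1 hd⟩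
      · by_cases hc2 : P ∣ A2 ∧ P ∣ B2
        · obtain ⟨C1, hC1⟩ := hc2.1
          obtain ⟨D1, hD1⟩ := hc2.2
          have hC1m : C1.Monic := hPm.of_mul_monic_left (hC1 ▸ h2)
          have hD1m : D1.Monic := hPm.of_mul_monic_left (hD1 ▸ h5)
          have heq' : A1 * C1 * A3 = B1 * D1 * B3 := by
            apply mul_left_cancel₀ hPz
            rw [hC1, hD1] at heq
            linear_combination heq
          have hdeg' : (A1 * C1 * A3).natDegree < N :=
            degred _ 0 (mul_ne_zero (mul_ne_zero hz1 hC1m.ne_zero) hz3)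
              (by rw [hC1]; ring)
          obtain ⟨G1, G2, G3, V12, V13, V21, V23, V31, V32, hd⟩ :=
            ih A1 C1 A3 B1 D1 B3 h1 hC1m h3 h4 hD1m h6 heq' hdeg'
          exact ⟨G1, P * G2, G3, V12, V13, V21, V23, V31, V32, stepA2 hPm hC1 hD1 hd⟩
        · by_cases hc3 : P ∣ A3 ∧ P ∣ B3
          · obtain ⟨C1, hC1⟩ := hc3.1
            obtain ⟨D1, hD1⟩ := hc3.2
            have hC1m : C1.Monic := hPm.of_mul_monic_left (hC1 ▸ h3)
            have hD1m : D1.Monic := hPm.of_mul_monic_left (hD1 ▸ h6)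
            have heq' : A1 * A2 * C1 = B1 * B2 * D1 := by
              apply mul_left_cancel₀ hPz
              rw [hC1, hD1] at heq
              linear_combination heq
            have hdeg' : (A1 * A2 * C1).natDegree < N :=
              degred _ 0 (mul_ne_zero (mul_ne_zero hz1 hz2) hC1m.ne_zero)
                (by rw [hC1]; ring)
            obtain ⟨G1, G2, G3, V12, V13, V21, V23, V31, V32, hd⟩ :=
              ih A1 A2 C1 B1 B2 D1 h1 h2 hC1m h4 h5 hD1m heq' hdeg'
            exact ⟨G1, G2, P * G3, V12, V13, V21, V23, V31, V32, stepA3 hPm hC1 hD1 hd⟩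
          · rcases hdA with hA | hA | hA <;> rcases hdB with hB | hB | hB
            · exact absurd ⟨hA, hB⟩ hc1
            · -- P ∣ A1, P ∣ B2
              have hnB1 : ¬ P ∣ B1 := fun h => hc1 ⟨hA, h⟩
              have hnA2 : ¬ P ∣ A2 := fun h => hc2 ⟨h, hB⟩
              obtain ⟨C1, hC1⟩ := hA
              obtain ⟨D1, hD1⟩ := hB
              have hC1m : C1.Monic := hPm.of_mul_monic_left (hC1 ▸ h1)
              have hD1m : D1.Monic := hPm.of_mul_monic_left (hD1 ▸ h5)
              have heq' : C1 * A2 * A3 = B1 * D1 * B3 := by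
                apply mul_left_cancel₀ hPz
                rw [hC1, hD1] at heq
                linear_combination heq
              have hdeg' : (C1 * A2 * A3).natDegree < N :=
                degred _ 0 (mul_ne_zero (mul_ne_zero hC1m.ne_zero hz2) hz3)
                  (by rw [hC1]; ring)
              obtain ⟨G1, G2, G3, V12, V13, V21, V23, V31, V32, hd⟩ :=
                ih C1 A2 A3 B1 D1 B3 hC1m h2 h3 h4 hD1m h6 heq' hdeg'
              exact ⟨G1, G2, G3, P * V12, V13, V21, V23, V31, V32,
                stepB12 hPm hPirr hC1 hD1 hnA2 hnB1 hd⟩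
            · -- P ∣ A1, P ∣ B3
              have hnB1 : ¬ P ∣ B1 := fun h => hc1 ⟨hA, h⟩
              have hnA3 : ¬ P ∣ A3 := fun h => hc3 ⟨h, hB⟩
              obtain ⟨C1, hC1⟩ := hA
              obtain ⟨D1, hD1⟩ := hB
              have hC1m : C1.Monic := hPm.of_mul_monic_left (hC1 ▸ h1)
              have hD1m : D1.Monic := hPm.of_mul_monic_left (hD1 ▸ h6)
              have heq' : C1 * A2 * A3 = B1 * B2 * D1 := by
                apply mul_left_cancel₀ hPz
                rw [hC1, hD1] at heq
                linear_combination heq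
              have hdeg' : (C1 * A2 * A3).natDegree < N :=
                degred _ 0 (mul_ne_zero (mul_ne_zero hC1m.ne_zero hz2) hz3)
                  (by rw [hC1]; ring)
              obtain ⟨G1, G2, G3, V12, V13, V21, V23, V31, V32, hd⟩ :=
                ih C1 A2 A3 B1 B2 D1 hC1m h2 h3 h4 h5 hD1m heq' hdeg'
              exact ⟨G1, G2, G3, V12, P * V13, V21, V23, V31, V32,
                stepB13 hPm hPirr hC1 hD1 hnA3 hnB1 hd⟩
            · -- P ∣ A2, P ∣ B1
              have hnB2 : ¬ P ∣ B2 := fun h => hc2 ⟨hA, h⟩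
              have hnA1 : ¬ P ∣ A1 := fun h => hc1 ⟨h, hB⟩
              obtain ⟨C1, hC1⟩ := hA
              obtain ⟨D1, hD1⟩ := hB
              have hC1m : C1.Monic := hPm.of_mul_monic_left (hC1 ▸ h2)
              have hD1m : D1.Monic := hPm.of_mul_monic_left (hD1 ▸ h4)
              have heq' : A1 * C1 * A3 = D1 * B2 * B3 := by
                apply mul_left_cancel₀ hPz
                rw [hC1, hD1] at heq
                linear_combination heq
              have hdeg' : (A1 * C1 * A3).natDegree < N :=
                degred _ 0 (mul_ne_zero (mul_ne_zero hz1 hC1m.ne_zero) hz3)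
                  (by rw [hC1]; ring)
              obtain ⟨G1, G2, G3, V12, V13, V21, V23, V31, V32, hd⟩ :=
                ih A1 C1 A3 D1 B2 B3 h1 hC1m h3 hD1m h5 h6 heq' hdeg'
              exact ⟨G1, G2, G3, V12, V13, P * V21, V23, V31, V32,
                stepB21 hPm hPirr hC1 hD1 hnA1 hnB2 hd⟩
            · exact absurd ⟨hA, hB⟩ hc2
            · -- P ∣ A2, P ∣ B3
              have hnB2 : ¬ P ∣ B2 := fun h => hc2 ⟨hA, h⟩
              have hnA3 : ¬ P ∣ A3 := fun h => hc3 ⟨h, hB⟩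
              obtain ⟨C1, hC1⟩ := hA
              obtain ⟨D1, hD1⟩ := hB
              have hC1m : C1.Monic := hPm.of_mul_monic_left (hC1 ▸ h2)
              have hD1m : D1.Monic := hPm.of_mul_monic_left (hD1 ▸ h6)
              have heq' : A1 * C1 * A3 = B1 * B2 * D1 := by
                apply mul_left_cancel₀ hPz
                rw [hC1, hD1] at heq
                linear_combination heq
              have hdeg' : (A1 * C1 * A3).natDegree < N :=
                degred _ 0 (mul_ne_zero (mul_ne_zero hz1 hC1m.ne_zero) hz3)
                  (by rw [hC1]; ring)
              obtain ⟨G1, G2, G3, V12, V13, V21, V23, V31, V32, hd⟩ :=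
                ih A1 C1 A3 B1 B2 D1 h1 hC1m h3 h4 h5 hD1m heq' hdeg'
              exact ⟨G1, G2, G3, V12, V13, V21, P * V23, V31, V32,
                stepB23 hPm hPirr hC1 hD1 hnA3 hnB2 hd⟩
            · -- P ∣ A3, P ∣ B1
              have hnB3 : ¬ P ∣ B3 := fun h => hc3 ⟨hA, h⟩
              have hnA1 : ¬ P ∣ A1 := fun h => hc1 ⟨h, hB⟩
              obtain ⟨C1, hC1⟩ := hA
              obtain ⟨D1, hD1⟩ := hB
              have hC1m : C1.Monic := hPm.of_mul_monic_left (hC1 ▸ h3)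
              have hD1m : D1.Monic := hPm.of_mul_monic_left (hD1 ▸ h4)
              have heq' : A1 * A2 * C1 = D1 * B2 * B3 := by
                apply mul_left_cancel₀ hPz
                rw [hC1, hD1] at heq
                linear_combination heq
              have hdeg' : (A1 * A2 * C1).natDegree < N :=
                degred _ 0 (mul_ne_zero (mul_ne_zero hz1 hz2) hC1m.ne_zero)
                  (by rw [hC1]; ring)
              obtain ⟨G1, G2, G3, V12, V13, V21, V23, V31, V32, hd⟩ :=
                ih A1 A2 C1 D1 B2 B3 h1 h2 hC1m hD1m h5 h6 heq' hdeg'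
              exact ⟨G1, G2, G3, V12, V13, V21, V23, P * V31, V32,
                stepB31 hPm hPirr hC1 hD1 hnA1 hnB3 hd⟩
            · -- P ∣ A3, P ∣ B2
              have hnB3 : ¬ P ∣ B3 := fun h => hc3 ⟨hA, h⟩
              have hnA2 : ¬ P ∣ A2 := fun h => hc2 ⟨h, hB⟩
              obtain ⟨C1, hC1⟩ := hA
              obtain ⟨D1, hD1⟩ := hB
              have hC1m : C1.Monic := hPm.of_mul_monic_left (hC1 ▸ h3)
              have hD1m : D1.Monic := hPm.of_mul_monic_left (hD1 ▸ h5)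
              have heq' : A1 * A2 * C1 = B1 * D1 * B3 := by
                apply mul_left_cancel₀ hPz
                rw [hC1, hD1] at heq
                linear_combination heq
              have hdeg' : (A1 * A2 * C1).natDegree < N :=
                degred _ 0 (mul_ne_zero (mul_ne_zero hz1 hz2) hC1m.ne_zero)
                  (by rw [hC1]; ring)
              obtain ⟨G1, G2, G3, V12, V13, V21, V23, V31, V32, hd⟩ :=
                ih A1 A2 C1 B1 D1 B3 h1 h2 hC1m h4 hD1m h6 heq' hdeg'
              exact ⟨G1, G2, G3, V12, V13, V21, V23, V31, P * V32,
                stepB32 hPm hPirr hC1 hD1 hnA2 hnB3 hd⟩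
            · exact absurd ⟨hA, hB⟩ hc3

end Aux

/-- **Canonical decomposition of solutions of `A₁A₂A₃ = B₁B₂B₃`** into the nine monic
factors `G₁,G₂,G₃` and `V_{i,j}`, with the coprimality conditions
`gcd(V_{i,j},V_{k,l}) = 1` for `i ≠ k`, `j ≠ l`; the decomposition is unique and
`G_i = gcd(A_i, B_i)`. -/
theorem decomposition_of_triple_products
    (Fq : Type) [Field Fq] [Fintype Fq]
    (A1 A2 A3 B1 B2 B3 : Polynomial Fq)
    (hA1 : A1.Monic) (hA2 : A2.Monic) (hA3 : A3.Monic)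
    (hB1 : B1.Monic) (hB2 : B2.Monic) (hB3 : B3.Monic)
    (heq : A1 * A2 * A3 = B1 * B2 * B3) :
    ∃ G1 G2 G3 V12 V13 V21 V23 V31 V32 : Polynomial Fq,
      Decomp3 A1 A2 A3 B1 B2 B3 G1 G2 G3 V12 V13 V21 V23 V31 V32 ∧
      G1 = gcdP A1 B1 ∧ G2 = gcdP A2 B2 ∧ G3 = gcdP A3 B3 ∧
      ∀ G1' G2' G3' W12 W13 W21 W23 W31 W32 : Polynomial Fq,
        Decomp3 A1 A2 A3 B1 B2 B3 G1' G2' G3' W12 W13 W21 W23 W31 W32 →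
          G1' = G1 ∧ G2' = G2 ∧ G3' = G3 ∧ W12 = V12 ∧ W13 = V13 ∧
            W21 = V21 ∧ W23 = V23 ∧ W31 = V31 ∧ W32 = V32 := by
  obtain ⟨G1, G2, G3, V12, V13, V21, V23, V31, V32, hd⟩ :=
    exists_decomp3 ((A1 * A2 * A3).natDegree + 1) A1 A2 A3 B1 B2 B3 hA1 hA2 hA3 hB1 hB2 hB3
      heq (Nat.lt_succ_self _)
  obtain ⟨g1, g2, g3⟩ := decomp3_gcds hd
  exact ⟨G1, G2, G3, V12, V13, V21, V23, V31, V32, hd, g1, g2, g3,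
    fun G1' G2' G3' W12 W13 W21 W23 W31 W32 hd' => decomp3_unique hd hd'⟩

end FFEH
end
end

section
/- Counting coprime factorizations with coprimality constraints: Suppose V_{1,3}, V_{2,3}, V_{3,1}, V_{3,2} ∈ ℳ satisfy gcd(V_{1,3}, V_{3,1}V_{3,2}) = 1 and gcd(V_{2,3}, V_{3,1}V_{3,2}) = 1. Then the set {(V_{1,2}, V_{2,1}) ∈ ℳ² : gcd(V_{1,2}, V_{2,3}V_{3,1}) = 1, gcd(V_{2,1}, V_{1,3}V_{3,2}) = 1, gcd(V_{1,2}, V_{2,1}) = 1} is the disjoint union, over V ∈ ℳ with gcd(V, gcd(V_{1,3}V_{3,1}, V_{2,3}V_{3,2})) = 1, of its subsets with V_{1,2}V_{2,1} = V; and for each such V the number of pairs (V_{1,2}, V_{2,1}) ∈ ℳ² with V_{1,2}V_{2,1} = V, gcd(V_{1,2}, V_{2,3}V_{3,1}) = 1, gcd(V_{2,1}, V_{1,3}V_{3,2}) = 1 and gcd(V_{1,2}, V_{2,1}) = 1 equals 2^{ω(V) − ω(gcd(V, V_{1,3}V_{2,3}V_{3,1}V_{3,2}))}. -/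
open scoped BigOperators
open Filter

noncomputable section

namespace FFEH

variable {Fq : Type} [Field Fq] [Fintype Fq]

/-!
A monic `V = V₁₂V₂₁` with `gcd(V₁₂, V₂₁) = 1` is determined by the set `T` of primes of `V`
dividing `V₁₂`, and every `T` occurs. The side conditions say exactly that `T` contains the
primes of `V` dividing `V₁₃V₃₂` and avoids those dividing `V₂₃V₃₁`. Under the hypotheses
`gcd(V₁₃V₂₃, V₃₁V₃₂) = 1`, exchanging `V₃₁` and `V₃₂` does not change the common divisors of
`V₁₃V₃₁` and `V₂₃V₃₂`, so for `V` coprime to `gcd(V₁₃V₃₁, V₂₃V₃₂)` no prime is subject to both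
conditions, and the admissible `T` form a boolean interval of rank
`ω(V) - ω(gcd(V, V₁₃V₂₃V₃₁V₃₂))`.
-/

open Polynomial UniqueFactorizationMonoid

section CoprimeAlgebra

variable {R : Type*} [CommRing R]

theorem dvd_mul_of_dvd_mul_of_isCoprime {g a b c d : R} (had : IsCoprime a d)
    (hab : g ∣ a * b) (hcd : g ∣ c * d) : g ∣ c * b := by
  obtain ⟨u, v, huv⟩ := had
  have hcb : c * b = u * c * (a * b) + v * b * (c * d) := by
    linear_combination (-(c * b)) * huv
  rw [hcb]
  exact dvd_add (dvd_mul_of_dvd_right hab _) (dvd_mul_of_dvd_right hcd _)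

theorem dvd_mul_and_dvd_mul_comm {A₁ A₂ B₁ B₂ g : R}
    (hA₁ : IsCoprime A₁ (B₁ * B₂)) (hA₂ : IsCoprime A₂ (B₁ * B₂)) :
    g ∣ A₁ * B₁ ∧ g ∣ A₂ * B₂ ↔ g ∣ A₂ * B₁ ∧ g ∣ A₁ * B₂ := by
  have h11 := hA₁.of_mul_right_left
  have h12 := hA₁.of_mul_right_right
  have h21 := hA₂.of_mul_right_left
  have h22 := hA₂.of_mul_right_right
  constructor
  · rintro ⟨h1, h2⟩
    refine ⟨dvd_mul_of_dvd_mul_of_isCoprime h12 h1 h2, ?_⟩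
    rw [mul_comm] at h1 h2 ⊢
    exact dvd_mul_of_dvd_mul_of_isCoprime h21.symm h1 h2
  · rintro ⟨h1, h2⟩
    refine ⟨dvd_mul_of_dvd_mul_of_isCoprime h22 h1 h2, ?_⟩
    rw [mul_comm] at h1 h2 ⊢
    exact dvd_mul_of_dvd_mul_of_isCoprime h11.symm h1 h2

theorem isCoprime_multiset_prod_left_iff [IsBezout R] {m : Multiset R} {D : R}
    (hm : ∀ P ∈ m, Irreducible P) : IsCoprime m.prod D ↔ ∀ P ∈ m, ¬ P ∣ D := by
  induction m using Multiset.induction_on with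
  | empty => simpa using isCoprime_one_left
  | cons a m ih =>
    rw [Multiset.forall_mem_cons] at hm
    rw [Multiset.prod_cons, IsCoprime.mul_left_iff, hm.1.coprime_iff_not_dvd, ih hm.2,
      Multiset.forall_mem_cons]

end CoprimeAlgebra

theorem eq_of_dvd_of_mem_normalizedFactors {α : Type*} [CommMonoidWithZero α]
    [NormalizationMonoid α] [UniqueFactorizationMonoid α] {a b P Q : α}
    (hP : P ∈ normalizedFactors a) (hQ : Q ∈ normalizedFactors b) (h : P ∣ Q) : P = Q := by
  rw [← normalize_normalized_factor P hP, ← normalize_normalized_factor Q hQ]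
  exact normalize_eq_normalize_iff_associated.mpr <|
    (irreducible_of_normalized_factor P hP).associated_of_dvd
      (irreducible_of_normalized_factor Q hQ) h

section CoprimeSplittings

variable {R : Type*} [CommSemiring R]

def coprimeSplittings (V D₁ D₂ : R[X]) : Set (R[X] × R[X]) :=
  {p | p.1.Monic ∧ p.2.Monic ∧ p.1 * p.2 = V ∧ IsCoprime p.1 D₁ ∧ IsCoprime p.2 D₂ ∧
    IsCoprime p.1 p.2}

theorem setOf_eq_biUnion_coprimeSplittings {D₁ D₂ g : R[X]} (h₁ : g ∣ D₁) (h₂ : g ∣ D₂) :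
    {p : R[X] × R[X] | p.1.Monic ∧ p.2.Monic ∧ IsCoprime p.1 D₁ ∧ IsCoprime p.2 D₂ ∧
        IsCoprime p.1 p.2} =
      ⋃ V ∈ {V : R[X] | V.Monic ∧ IsCoprime V g}, coprimeSplittings V D₁ D₂ := by
  ext p
  simp only [Set.mem_iUnion, exists_prop]
  constructor
  · rintro ⟨hp₁, hp₂, hD₁, hD₂, hp₁₂⟩
    exact ⟨p.1 * p.2, ⟨hp₁.mul hp₂, (hD₁.of_isCoprime_of_dvd_right h₁).mul_left
      (hD₂.of_isCoprime_of_dvd_right h₂)⟩, hp₁, hp₂, rfl, hD₁, hD₂, hp₁₂⟩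
  · rintro ⟨V, -, hp₁, hp₂, -, hD₁, hD₂, hp₁₂⟩
    exact ⟨hp₁, hp₂, hD₁, hD₂, hp₁₂⟩

end CoprimeSplittings

section Splittings

open scoped Classical

variable {K : Type*} [Field K]

theorem prod_normalizedFactors_of_monic {V : K[X]} (hV : V.Monic) :
    (normalizedFactors V).prod = V := by
  simpa [hV.leadingCoeff] using leadingCoeff_mul_prod_normalizedFactors V

theorem monic_prod_of_le_normalizedFactors {V : K[X]} {m : Multiset K[X]}
    (hm : m ≤ normalizedFactors V) : m.prod.Monic := by
  simpa using monic_multiset_prod_of_monic m id fun P hP =>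
    (normalize_normalized_factor P (Multiset.mem_of_le hm hP)) ▸
      monic_normalize (irreducible_of_normalized_factor P (Multiset.mem_of_le hm hP)).ne_zero

def splitByPrimes (V : K[X]) (T : Finset K[X]) : K[X] × K[X] :=
  (((normalizedFactors V).filter (· ∈ T)).prod, ((normalizedFactors V).filter (· ∉ T)).prod)

theorem normalizedFactors_splitByPrimes_fst (V : K[X]) (T : Finset K[X]) :
    normalizedFactors (splitByPrimes V T).1 = (normalizedFactors V).filter (· ∈ T) := by
  rw [splitByPrimes, normalizedFactors_prod_eq _ fun P hP =>
    irreducible_of_normalized_factor P (Multiset.mem_of_mem_filter hP)]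
  conv_rhs => rw [← Multiset.map_id ((normalizedFactors V).filter (· ∈ T))]
  exact Multiset.map_congr rfl fun P hP =>
    normalize_normalized_factor P (Multiset.mem_of_mem_filter hP)

theorem injOn_splitByPrimes (V : K[X]) :
    Set.InjOn (splitByPrimes V) {T | T ⊆ primeFactors V} := by
  refine Set.LeftInvOn.injOn (f₁' := fun p => primeFactors p.1) fun T hT => ?_
  simp only [primeFactors, normalizedFactors_splitByPrimes_fst, Multiset.toFinset_filter,
    Finset.filter_mem_eq_inter]
  exact Finset.inter_eq_right.mpr hT

theorem splitByPrimes_mem_coprimeSplittings {V D₁ D₂ : K[X]} (hV : V.Monic) {T : Finset K[X]}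
    (hT : T ∈ Finset.Icc ((primeFactors V).filter (· ∣ D₂))
      ((primeFactors V).filter (fun P => ¬ P ∣ D₁))) :
    splitByPrimes V T ∈ coprimeSplittings V D₁ D₂ := by
  obtain ⟨hD₂T, hTD₁⟩ := Finset.mem_Icc.mp hT
  have isCoprime_iff {q : K[X] → Prop} [DecidablePred q] {D : K[X]} :
      IsCoprime ((normalizedFactors V).filter q).prod D ↔
        ∀ P ∈ (normalizedFactors V).filter q, ¬ P ∣ D :=
    isCoprime_multiset_prod_left_iff fun P hP =>
      irreducible_of_normalized_factor P (Multiset.mem_of_mem_filter hP)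
  refine ⟨monic_prod_of_le_normalizedFactors (Multiset.filter_le _ _),
    monic_prod_of_le_normalizedFactors (Multiset.filter_le _ _), ?_, ?_, ?_, ?_⟩
  · rw [splitByPrimes, Multiset.prod_filter_mul_prod_filter_not,
      prod_normalizedFactors_of_monic hV]
  · exact isCoprime_iff.mpr fun P hP =>
      (Finset.mem_filter.mp (hTD₁ (Multiset.of_mem_filter hP))).2
  · refine isCoprime_iff.mpr fun P hP hPD => ?_
    rw [Multiset.mem_filter] at hP
    exact hP.2 (hD₂T (Finset.mem_filter.mpr ⟨mem_primeFactors.mpr hP.1, hPD⟩))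
  · refine isCoprime_iff.mpr fun P hP hPQ => ?_
    obtain ⟨Q, hQ, hPQ⟩ := (prime_of_normalized_factor P
      (Multiset.mem_of_mem_filter hP)).exists_mem_multiset_dvd hPQ
    rw [Multiset.mem_filter] at hP hQ
    exact hQ.2 (eq_of_dvd_of_mem_normalizedFactors hP.1 hQ.1 hPQ ▸ hP.2)

theorem exists_splitByPrimes_eq {V D₁ D₂ : K[X]} {p : K[X] × K[X]}
    (hp : p ∈ coprimeSplittings V D₁ D₂) :
    ∃ T ∈ Finset.Icc ((primeFactors V).filter (· ∣ D₂))
      ((primeFactors V).filter (fun P => ¬ P ∣ D₁)), splitByPrimes V T = p := by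
  obtain ⟨h₁, h₂, rfl, hD₁, hD₂, h₁₂⟩ := hp
  have hnf : normalizedFactors (p.1 * p.2) = normalizedFactors p.1 + normalizedFactors p.2 :=
    normalizedFactors_mul h₁.ne_zero h₂.ne_zero
  have hdisj : ∀ {P}, P ∈ normalizedFactors p.1 → P ∉ normalizedFactors p.2 :=
    Multiset.disjoint_left.mp (disjoint_normalizedFactors h₁₂.isRelPrime)
  have not_dvd {a D : K[X]} (ha : IsCoprime a D) {P : K[X]} (hP : P ∈ normalizedFactors a) :
      ¬ P ∣ D := fun h => (irreducible_of_normalized_factor P hP).not_isUnit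
    (ha.isUnit_of_dvd' (dvd_of_mem_normalizedFactors hP) h)
  refine ⟨primeFactors p.1, Finset.mem_Icc.mpr ⟨fun P hP => ?_, fun P hP => ?_⟩,
    Prod.ext ?_ ?_⟩
  · rw [Finset.mem_filter, mem_primeFactors, hnf, Multiset.mem_add] at hP
    exact mem_primeFactors.mpr (hP.1.resolve_right fun h => not_dvd hD₂ h hP.2)
  · have hP₁ := mem_primeFactors.mp hP
    exact Finset.mem_filter.mpr ⟨mem_primeFactors.mpr (hnf ▸ Multiset.mem_add.mpr
      (Or.inl hP₁)), not_dvd hD₁ hP₁⟩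
  · dsimp only [splitByPrimes]
    rw [hnf, Multiset.filter_add,
      Multiset.filter_eq_self.mpr fun P hP => mem_primeFactors.mpr hP,
      Multiset.filter_eq_nil.mpr fun P hP hP₁ => hdisj (mem_primeFactors.mp hP₁) hP,
      add_zero, prod_normalizedFactors_of_monic h₁]
  · dsimp only [splitByPrimes]
    rw [hnf, Multiset.filter_add,
      Multiset.filter_eq_nil.mpr fun P hP hP₂ => hP₂ (mem_primeFactors.mpr hP),
      Multiset.filter_eq_self.mpr fun P hP => mt mem_primeFactors.mp fun hP₁ => hdisj hP₁ hP,
      zero_add, prod_normalizedFactors_of_monic h₂]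

theorem ncard_coprimeSplittings {V D₁ D₂ : K[X]} (hV : V.Monic)
    (h : ∀ P ∈ primeFactors V, P ∣ D₁ → ¬ P ∣ D₂) :
    (coprimeSplittings V D₁ D₂).ncard = 2 ^ ((primeFactors V).card -
      ((primeFactors V).filter fun P => P ∣ D₁ ∨ P ∣ D₂).card) := by
  set Ω := primeFactors V
  have hImage : coprimeSplittings V D₁ D₂ =
      splitByPrimes V '' ↑(Finset.Icc (Ω.filter (· ∣ D₂)) (Ω.filter fun P => ¬ P ∣ D₁)) := by
    ext p
    constructor
    · intro hp
      obtain ⟨T, hT, rfl⟩ := exists_splitByPrimes_eq hp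
      exact ⟨T, hT, rfl⟩
    · rintro ⟨T, hT, rfl⟩
      exact splitByPrimes_mem_coprimeSplittings hV hT
  have hInj : Set.InjOn (splitByPrimes V) ↑(Finset.Icc (Ω.filter (· ∣ D₂))
      (Ω.filter fun P => ¬ P ∣ D₁)) :=
    (injOn_splitByPrimes V).mono fun T hT =>
      (Finset.mem_Icc.mp hT).2.trans (Finset.filter_subset _ _)
  have hsub : Ω.filter (· ∣ D₂) ⊆ Ω.filter fun P => ¬ P ∣ D₁ := fun P hP => by
    rw [Finset.mem_filter] at hP ⊢
    exact ⟨hP.1, fun hP₁ => h P hP.1 hP₁ hP.2⟩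
  have hdisj : Disjoint (Ω.filter (· ∣ D₁)) (Ω.filter (· ∣ D₂)) := Finset.disjoint_filter.mpr h
  have hcompl := Finset.card_filter_add_card_filter_not (s := Ω) (· ∣ D₁)
  rw [hImage, hInj.ncard_image, Set.ncard_coe_finset, Finset.card_Icc_finset hsub,
    Finset.filter_or, Finset.card_union_of_disjoint hdisj]
  congr 1
  omega

end Splittings

section Omega

variable {K : Type} [Field K]

open Classical in
theorem dvd_gcdP_iff {A B P : K[X]} : P ∣ gcdP A B ↔ P ∣ A ∧ P ∣ B := by
  unfold gcdP
  set G := EuclideanDomain.gcd A B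
  have hG : Associated G (C G.leadingCoeff⁻¹ * G) := by
    by_cases h : G = 0
    · simp [h]
    · exact (associated_unit_mul_left G _
        (isUnit_C.mpr (inv_ne_zero (leadingCoeff_ne_zero.mpr h)).isUnit)).symm
  rw [← hG.dvd_iff_dvd_right]
  exact ⟨fun h => ⟨h.trans (EuclideanDomain.gcd_dvd_left A B),
    h.trans (EuclideanDomain.gcd_dvd_right A B)⟩, fun h => EuclideanDomain.dvd_gcd h.1 h.2⟩

open scoped Classical

theorem mem_primeFactors_iff_isMonicPrime {V P : K[X]} (hV : V ≠ 0) :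
    P ∈ primeFactors V ↔ IsMonicPrime P ∧ P ∣ V := by
  rw [mem_primeFactors, Polynomial.mem_normalizedFactors_iff hV, IsMonicPrime, and_assoc,
    and_left_comm]

theorem omegaP_eq_card_primeFactors {V : K[X]} (hV : V ≠ 0) :
    omegaP V = (primeFactors V).card := by
  rw [omegaP, ← Set.ncard_coe_finset]
  congr 1
  ext P
  exact (mem_primeFactors_iff_isMonicPrime hV).symm

theorem omegaP_gcdP_mul_eq_card_filter {V : K[X]} (hV : V ≠ 0) (D₁ D₂ : K[X]) :
    omegaP (gcdP V (D₁ * D₂)) =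
      ((primeFactors V).filter fun P => P ∣ D₁ ∨ P ∣ D₂).card := by
  rw [omegaP, ← Set.ncard_coe_finset]
  congr 1
  ext P
  rw [Finset.mem_coe, Finset.mem_filter, mem_primeFactors_iff_isMonicPrime hV]
  change IsMonicPrime P ∧ P ∣ gcdP V (D₁ * D₂) ↔ _
  rw [dvd_gcdP_iff, and_assoc]
  exact and_congr_right fun hP => and_congr_right fun _ => hP.2.prime.dvd_mul

theorem ncard_coprimeSplittings_eq_two_pow_omegaP {V D₁ D₂ : K[X]} (hV : V.Monic)
    (hVD : IsCoprime V (gcdP D₁ D₂)) :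
    (coprimeSplittings V D₁ D₂).ncard = 2 ^ (omegaP V - omegaP (gcdP V (D₁ * D₂))) := by
  have h (P : K[X]) (hP : P ∈ primeFactors V) (h₁ : P ∣ D₁) (h₂ : P ∣ D₂) : False :=
    (irreducible_of_normalized_factor P (mem_primeFactors.mp hP)).not_isUnit
      (hVD.isUnit_of_dvd' (dvd_of_mem_normalizedFactors (mem_primeFactors.mp hP))
        (dvd_gcdP_iff.mpr ⟨h₁, h₂⟩))
  rw [ncard_coprimeSplittings hV h, omegaP_eq_card_primeFactors hV.ne_zero,
    omegaP_gcdP_mul_eq_card_filter hV.ne_zero]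

end Omega

theorem coprime_factorization_count_general
    (Fq : Type) [Field Fq]
    (V13 V23 V31 V32 : Polynomial Fq)
    (hc1 : IsCoprime V13 (V31 * V32)) (hc2 : IsCoprime V23 (V31 * V32)) :
    ({p : Polynomial Fq × Polynomial Fq |
        p.1.Monic ∧ p.2.Monic ∧ IsCoprime p.1 (V23 * V31) ∧
        IsCoprime p.2 (V13 * V32) ∧ IsCoprime p.1 p.2} =
      ⋃ V ∈ {V : Polynomial Fq | V.Monic ∧ IsCoprime V (gcdP (V13 * V31) (V23 * V32))},
        {p : Polynomial Fq × Polynomial Fq |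
          p.1.Monic ∧ p.2.Monic ∧ p.1 * p.2 = V ∧ IsCoprime p.1 (V23 * V31) ∧
          IsCoprime p.2 (V13 * V32) ∧ IsCoprime p.1 p.2}) ∧
    ∀ V : Polynomial Fq, V.Monic → IsCoprime V (gcdP (V13 * V31) (V23 * V32)) →
      Set.ncard {p : Polynomial Fq × Polynomial Fq |
          p.1.Monic ∧ p.2.Monic ∧ p.1 * p.2 = V ∧ IsCoprime p.1 (V23 * V31) ∧
          IsCoprime p.2 (V13 * V32) ∧ IsCoprime p.1 p.2} =
        2 ^ (omegaP V - omegaP (gcdP V (V13 * V23 * V31 * V32))) := by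
  set g := gcdP (V13 * V31) (V23 * V32)
  set g' := gcdP (V23 * V31) (V13 * V32)
  have hswap (h : Polynomial Fq) := dvd_mul_and_dvd_mul_comm (g := h) hc1 hc2
  have hg : g ∣ V23 * V31 ∧ g ∣ V13 * V32 := (hswap g).mp (dvd_gcdP_iff.mp dvd_rfl)
  have hg' : g' ∣ g := dvd_gcdP_iff.mpr ((hswap g').mpr (dvd_gcdP_iff.mp dvd_rfl))
  refine ⟨setOf_eq_biUnion_coprimeSplittings hg.1 hg.2, fun V hV hVg => ?_⟩
  rw [show V13 * V23 * V31 * V32 = V23 * V31 * (V13 * V32) by ring]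
  exact ncard_coprimeSplittings_eq_two_pow_omegaP hV (hVg.of_isCoprime_of_dvd_right hg')

/-- **Counting coprime factorizations with coprimality constraints.** The set of pairs
`(V₁₂, V₂₁)` decomposes according to the product `V = V₁₂V₂₁`, which is necessarily
coprime to `gcd(V₁₃V₃₁, V₂₃V₃₂)`, and for each admissible `V` the number of such pairs
is `2^{ω(V) - ω(gcd(V, V₁₃V₂₃V₃₁V₃₂))}`. -/
theorem coprime_factorization_count
    (Fq : Type) [Field Fq] [Fintype Fq]
    (V13 V23 V31 V32 : Polynomial Fq)
    (h13 : V13.Monic) (h23 : V23.Monic) (h31 : V31.Monic) (h32 : V32.Monic)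
    (hc1 : IsCoprime V13 (V31 * V32)) (hc2 : IsCoprime V23 (V31 * V32)) :
    ({p : Polynomial Fq × Polynomial Fq |
        p.1.Monic ∧ p.2.Monic ∧ IsCoprime p.1 (V23 * V31) ∧
        IsCoprime p.2 (V13 * V32) ∧ IsCoprime p.1 p.2} =
      ⋃ V ∈ {V : Polynomial Fq | V.Monic ∧ IsCoprime V (gcdP (V13 * V31) (V23 * V32))},
        {p : Polynomial Fq × Polynomial Fq |
          p.1.Monic ∧ p.2.Monic ∧ p.1 * p.2 = V ∧ IsCoprime p.1 (V23 * V31) ∧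
          IsCoprime p.2 (V13 * V32) ∧ IsCoprime p.1 p.2}) ∧
    ∀ V : Polynomial Fq, V.Monic → IsCoprime V (gcdP (V13 * V31) (V23 * V32)) →
      Set.ncard {p : Polynomial Fq × Polynomial Fq |
          p.1.Monic ∧ p.2.Monic ∧ p.1 * p.2 = V ∧ IsCoprime p.1 (V23 * V31) ∧
          IsCoprime p.2 (V13 * V32) ∧ IsCoprime p.1 p.2} =
        2 ^ (omegaP V - omegaP (gcdP V (V13 * V23 * V31 * V32))) :=
  coprime_factorization_count_general Fq V13 V23 V31 V32 hc1 hc2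

end FFEH
end
end
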